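/- arXiv:2407.03999 — 8 statements merged into one kernel-verified Lean document; each statement's English description precedes it below -/
import Mathlib

section
/- Let A be a totally unimodular real matrix and let v be a nonzero vector in the kernel of A whose support is minimal among supports of nonzero kernel vectors. Then there exists a vector w in the kernel of A with the same support as v, all of whose entries lie in {-1, 0, 1}, and every kernel vector with entries in {-1,0,1} and support equal to supp(v) is either w or -w. -/
/-!
Fix `e₀` in the support of `v`. By minimality, a kernel vector supported in `supp v` is
determined by its value at `e₀`, hence is a multiple of `v`; in particular the columns of `A`
indexed by `supp v \ {e₀}` are linearly independent, so they contain an invertible square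
submatrix `B` of `A`. The entries of `w = (v e₀)⁻¹ • v` off `e₀` then solve a system `B x = b`
with `b` taken from the column `e₀`, and Cramer's rule together with total unimodularity puts them
in `{-1, 0, 1}`. Any simple kernel vector with the same support is `u e₀ • w` with `u e₀ = ±1`.
-/

open Matrix

/-- The support of a vector. -/
def supp {α : Type*} (v : α → ℝ) : Set α := {x | v x ≠ 0}

/-- A vector is simple if all entries lie in `{-1,0,1}`. -/
def Simple {α : Type*} (v : α → ℝ) : Prop := ∀ x, v x = -1 ∨ v x = 0 ∨ v x = 1

/-- A signed circuit of the regular matroid realized by `A`: a simple kernel vector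
with support minimal among supports of nonzero kernel vectors. -/
def SignedCircuit {m E : Type*} [Fintype E] (A : Matrix m E ℝ) (C : E → ℝ) : Prop :=
  A.mulVec C = 0 ∧ C ≠ 0 ∧ Simple C ∧
    ∀ D : E → ℝ, A.mulVec D = 0 → D ≠ 0 → supp D ⊆ supp C → supp D = supp C

/-- A signed cocircuit: a simple row-space vector with support minimal among
supports of nonzero row-space vectors. -/
def SignedCocircuit {m E : Type*} [Fintype m] (A : Matrix m E ℝ) (C : E → ℝ) : Prop :=
  (∃ y, Matrix.vecMul y A = C) ∧ C ≠ 0 ∧ Simple C ∧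
    ∀ D : E → ℝ, (∃ y, Matrix.vecMul y A = D) → D ≠ 0 → supp D ⊆ supp C → supp D = supp C

theorem Matrix.exists_submatrix_rows_isUnit {K m n : Type*} [Field K] [Fintype m] [Fintype n]
    [DecidableEq n] {M : Matrix m n K} (hM : Function.Injective M.mulVec) :
    ∃ f : n → m, IsUnit (M.submatrix f id) := by
  obtain ⟨κ, a, ha, hspan, hli⟩ := exists_linearIndependent' K M.row
  have : Fintype κ := Fintype.ofInjective a ha
  have hrank : (M.submatrix a id).rank = M.rank := by
    rw [rank_eq_finrank_span_row, rank_eq_finrank_span_row]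
    exact congrArg (fun S : Submodule K (n → K) => Module.finrank K S) hspan
  have hcard : Fintype.card n = Fintype.card κ := by
    rw [← LinearIndependent.rank_matrix (M := M.submatrix a id) hli, hrank, ← rank_transpose,
      LinearIndependent.rank_matrix]
    rwa [row_transpose, ← mulVec_injective_iff]
  let e := Fintype.equivOfCardEq hcard
  refine ⟨a ∘ e, linearIndependent_rows_iff_isUnit.mp ?_⟩
  exact hli.comp e e.injective

theorem Matrix.IsTotallyUnimodular.simple_of_submatrix_mulVec_eq_col {m n T : Type*} [Fintype T]
    [DecidableEq T] {A : Matrix m n ℝ} (hA : A.IsTotallyUnimodular) {f : T → m} {g : T → n}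
    (hB : IsUnit (A.submatrix f g)) {e : n} {x : T → ℝ}
    (hx : A.submatrix f g *ᵥ x = fun i => A (f i) e) : Simple x := by
  set B := A.submatrix f g
  have hdet : B.det ≠ 0 := ((isUnit_iff_isUnit_det B).mp hB).ne_zero
  have hcramer : B.det • x = B.cramer (fun i => A (f i) e) := by
    apply mulVec_injective_iff_isUnit.mpr hB
    rw [mulVec_smul, hx, mulVec_cramer]
  intro k
  have hupdate : B.updateCol k (fun i => A (f i) e) = A.submatrix f (Function.update g k e) := by
    ext i l
    by_cases hl : l = k <;> simp [B, hl]
  obtain ⟨σ, hσ⟩ := (isTotallyUnimodular_iff_fintype A).mp hA T f g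
  obtain ⟨τ, hτ⟩ := (isTotallyUnimodular_iff_fintype A).mp hA T f (Function.update g k e)
  have hxk : B.det * x k = τ := by
    rw [hτ, ← hupdate, ← cramer_apply, ← hcramer, Pi.smul_apply, smul_eq_mul]
  rw [← hσ] at hdet hxk
  cases σ <;> cases τ <;> simp at hdet hxk <;> grind

theorem Matrix.submatrix_id_val_mulVec {R m E : Type*} [Semiring R] [Fintype E] (A : Matrix m E R)
    {s : Finset E} {y : E → R} (hy : ∀ e ∉ s, y e = 0) :
    A.submatrix id ((↑) : s → E) *ᵥ (fun t => y t) = A *ᵥ y := by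
  ext i
  simp only [mulVec, dotProduct, submatrix_apply, id]
  rw [Finset.sum_coe_sort s (fun e => A i e * y e)]
  exact Finset.sum_subset (Finset.subset_univ s) fun e _ he => by rw [hy e he, mul_zero]

def KernelSupportMinimal {m E : Type*} [Fintype E] (A : Matrix m E ℝ) (v : E → ℝ) : Prop :=
  ∀ u : E → ℝ, A *ᵥ u = 0 → u ≠ 0 → supp u ⊆ supp v → supp u = supp v

namespace KernelSupportMinimal

variable {m E : Type*} [Fintype E] {A : Matrix m E ℝ} {v : E → ℝ} {e₀ : E}

theorem eq_smul_of_supp_subset (hmin : KernelSupportMinimal A v) (hv : A *ᵥ v = 0)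
    (he₀ : v e₀ ≠ 0) {u : E → ℝ} (hu : A *ᵥ u = 0) (hsub : supp u ⊆ supp v) :
    u = (u e₀ / v e₀) • v := by
  by_contra hne
  have hz : A *ᵥ (u - (u e₀ / v e₀) • v) = 0 := by
    rw [mulVec_sub, mulVec_smul, hu, hv, smul_zero, sub_zero]
  have hzsub : supp (u - (u e₀ / v e₀) • v) ⊆ supp v := fun e he hve => he (by
    have hue : u e = 0 := by_contra fun h => hsub h hve
    simp [hue, hve])
  have he₀z : e₀ ∈ supp (u - (u e₀ / v e₀) • v) :=
    hmin _ hz (sub_ne_zero.mpr hne) hzsub ▸ he₀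
  exact he₀z (by simp [he₀])

theorem injective_mulVec_submatrix (hmin : KernelSupportMinimal A v)
    (hv : A *ᵥ v = 0) (he₀ : v e₀ ≠ 0) {s : Finset E} (hs : ↑s ⊆ supp v) (he₀s : e₀ ∉ s) :
    Function.Injective (A.submatrix id ((↑) : s → E)).mulVec := by
  classical
  refine (injective_iff_map_eq_zero (A.submatrix id ((↑) : s → E)).mulVecLin).mpr fun z hz => ?_
  let z' : E → ℝ := fun e => if h : e ∈ s then z ⟨e, h⟩ else 0
  have hz' : ∀ e ∉ s, z' e = 0 := fun e he => dif_neg he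
  have hAz' : A *ᵥ z' = 0 := by
    rw [← A.submatrix_id_val_mulVec hz']
    simpa [z'] using hz
  have hsub : supp z' ⊆ supp v := fun e he => hs (by_contra fun h => he (hz' e h))
  have := hmin.eq_smul_of_supp_subset hv he₀ hAz' hsub
  rw [hz' e₀ he₀s, zero_div, zero_smul] at this
  ext t
  simpa [z'] using congrFun this t

theorem simple_inv_smul [Fintype m] (hmin : KernelSupportMinimal A v)
    (hA : A.IsTotallyUnimodular) (hv : A *ᵥ v = 0) (he₀ : v e₀ ≠ 0) :
    Simple ((v e₀)⁻¹ • v) := by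
  classical
  let s : Finset E := Finset.univ.filter fun e => v e ≠ 0 ∧ e ≠ e₀
  -- `y` is supported on `s` and `A *ᵥ y` is the column `e₀`: the system that Cramer's rule solves
  let y : E → ℝ := Pi.single e₀ 1 - (v e₀)⁻¹ • v
  have hy : ∀ e ∉ s, y e = 0 := by
    intro e he
    by_cases he' : e = e₀
    · simp [y, he', he₀]
    · have hve : v e = 0 := by simpa [s, he'] using he
      simp [y, he', hve]
  have hAy : A *ᵥ y = fun i => A i e₀ := by
    ext i
    simp [y, mulVec_sub, mulVec_smul, hv]
  have hs : ↑s ⊆ supp v := fun e he => (Finset.mem_filter.mp he).2.1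
  have he₀s : e₀ ∉ s := fun h => (Finset.mem_filter.mp h).2.2 rfl
  obtain ⟨f, hf⟩ := exists_submatrix_rows_isUnit (hmin.injective_mulVec_submatrix hv he₀ hs he₀s)
  have hx : Simple fun t : s => y t := hA.simple_of_submatrix_mulVec_eq_col hf (e := e₀) <| by
    ext j
    exact (congrFun (A.submatrix_id_val_mulVec hy) (f j)).trans (congrFun hAy (f j))
  intro e
  have hw : ((v e₀)⁻¹ • v) e = (Pi.single e₀ 1 : E → ℝ) e - y e := by simp [y]
  by_cases he : e ∈ s
  · have he' : e ≠ e₀ := fun h => he₀s (h ▸ he)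
    rw [hw, Pi.single_eq_of_ne he', zero_sub]
    rcases hx ⟨e, he⟩ with h | h | h <;> simp [h]
  · rw [hw, hy e he, sub_zero]
    by_cases he' : e = e₀ <;> simp [he']

end KernelSupportMinimal

theorem support_minimal_kernel_vector_simple_representative
    {m E : Type*} [Fintype m] [Fintype E] (A : Matrix m E ℝ)
    (hA : A.IsTotallyUnimodular) (v : E → ℝ) (hv : A.mulVec v = 0) (hv0 : v ≠ 0)
    (hmin : ∀ u : E → ℝ, A.mulVec u = 0 → u ≠ 0 → supp u ⊆ supp v → supp u = supp v) :
    ∃ w : E → ℝ, A.mulVec w = 0 ∧ supp w = supp v ∧ Simple w ∧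
      ∀ u : E → ℝ, A.mulVec u = 0 → Simple u → supp u = supp v → u = w ∨ u = -w := by
  replace hmin : KernelSupportMinimal A v := hmin
  obtain ⟨e₀, he₀⟩ : ∃ e, v e ≠ 0 := Function.ne_iff.mp hv0
  refine ⟨(v e₀)⁻¹ • v, by rw [mulVec_smul, hv, smul_zero], ?_,
    hmin.simple_inv_smul hA hv he₀, fun u hu hus husupp => ?_⟩
  · ext e
    simp [supp, he₀]
  have hue₀ : u e₀ ≠ 0 := (husupp ▸ he₀ : e₀ ∈ supp u)
  rw [hmin.eq_smul_of_supp_subset hv he₀ hu husupp.le, div_eq_mul_inv, ← smul_smul]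
  rcases hus e₀ with h | h | h
  · simp [h]
  · exact absurd h hue₀
  · simp [h]
end

section
/- Let A be a totally unimodular matrix with columns indexed by E, and let P be a vector in ker(A) with all entries in {-1,0,1}. Then P can be written as a finite sum of signed circuits of A (i.e., {-1,0,1}-vectors in ker(A) with support-minimal nonzero support) whose supports are pairwise disjoint, and such that each signed circuit agrees in sign with P on its support. -/
/-!
Take a sign-compatible nonzero kernel vector `Q` of `P` with inclusion-minimal support among
such vectors. Its support is then minimal among all nonzero kernel vectors: otherwise subtracting
a suitable multiple of a kernel vector `D` with smaller support kills one more coordinate of `Q`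
without flipping any sign. For a minimal support `S ∋ e`, the columns of `S \ {e}` are
independent, so `Q` restricted to `S \ {e}` solves a nonsingular square system of `A`; Cramer's
rule and total unimodularity then give `|Q f| = |Q e|` on `S`. Rescaling, `Q` becomes a signed
circuit that agrees with `P` on its support; subtracting it from `P` leaves a simple kernel
vector of smaller support, and we induct.
-/

open Matrix

theorem Matrix.exists_isUnit_submatrix_of_linearIndependent_col {K m ι : Type*} [Field K]
    [Fintype m] [Fintype ι] [DecidableEq ι] (M : Matrix m ι K) (hM : LinearIndependent K M.col) :
    ∃ r : ι → m, IsUnit (M.submatrix r id) := by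
  obtain ⟨κ, a, -, hspan, hli⟩ := exists_linearIndependent' K M.row
  have hspan_top : Submodule.span K (Set.range M.row) = ⊤ := by
    apply Submodule.eq_top_of_finrank_eq
    rw [← rank_eq_finrank_span_row, ← rank_transpose, Module.finrank_fintype_fun_eq_card]
    exact LinearIndependent.rank_matrix (by rwa [row_transpose])
  let basis := Module.Basis.mk hli (by rw [hspan, hspan_top])
  have : Fintype κ := FiniteDimensional.fintypeBasisIndex basis
  let eqv : ι ≃ κ := Fintype.equivOfCardEq <| by
    rw [← Module.finrank_eq_card_basis basis, Module.finrank_fintype_fun_eq_card]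
  refine ⟨a ∘ eqv, ?_⟩
  rw [← linearIndependent_rows_iff_isUnit]
  exact hli.comp eqv eqv.injective

theorem abs_eq_one_of_mem_range_signType_cast {R : Type*} [Ring R] [LinearOrder R]
    [IsOrderedRing R] {x : R} (hx : x ∈ Set.range SignType.cast) (h0 : x ≠ 0) : |x| = 1 := by
  obtain ⟨s, rfl⟩ := hx
  cases s <;> simp_all

theorem Matrix.cramer_mulVec {n R : Type*} [Fintype n] [DecidableEq n] [CommRing R]
    (B : Matrix n n R) (q : n → R) : B.cramer (B *ᵥ q) = B.det • q := by
  rw [cramer_eq_adjugate_mulVec, mulVec_mulVec, adjugate_mul, smul_mulVec, one_mulVec]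

theorem Matrix.IsTotallyUnimodular.abs_eq_of_mulVec_submatrix_eq {m n ι R : Type*} [CommRing R]
    [LinearOrder R] [IsStrictOrderedRing R] [Fintype ι] [DecidableEq ι] [DecidableEq n]
    {A : Matrix m n R} (hA : A.IsTotallyUnimodular) {r : ι → m} {c : ι → n}
    (hB : (A.submatrix r c).det ≠ 0) {q : ι → R} {t : R} {e : n}
    (hq : A.submatrix r c *ᵥ q = t • fun i => A (r i) e) {j : ι} (hqj : q j ≠ 0) :
    |q j| = |t| := by
  have hdet := (isTotallyUnimodular_iff_fintype A).mp hA ι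
  set N := A.submatrix r (Function.update c j e)
  have hN : (A.submatrix r c).updateCol j (fun i => A (r i) e) = N := by
    ext i k
    by_cases hk : k = j <;> simp [N, hk]
  have hcramer : (A.submatrix r c).det * q j = t * N.det := by
    have := congrFun ((A.submatrix r c).cramer_mulVec q) j
    rw [hq, map_smul, Pi.smul_apply, cramer_apply, hN] at this
    simpa using this.symm
  have hN0 : N.det ≠ 0 := by
    intro h
    rw [h, mul_zero] at hcramer
    exact hqj ((mul_eq_zero.mp hcramer).resolve_left hB)
  have := congrArg abs hcramer
  rwa [abs_mul, abs_mul, abs_eq_one_of_mem_range_signType_cast (hdet r c) hB,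
    abs_eq_one_of_mem_range_signType_cast (hdet r _) hN0, one_mul, mul_one] at this

theorem supp_eq_support {α : Type*} (v : α → ℝ) : supp v = Function.support v := rfl

theorem Simple.indicator {α : Type*} {v : α → ℝ} (hv : Simple v) (s : Set α) :
    Simple (s.indicator v) := by
  intro x
  by_cases hx : x ∈ s <;> simp [hx, hv x]

def ConformalTo {α : Type*} (u v : α → ℝ) : Prop := ∀ x, u x ≠ 0 → 0 < u x * v x

namespace ConformalTo

variable {α : Type*} {u v w : α → ℝ}

theorem refl (u : α → ℝ) : ConformalTo u u := fun _ hx => mul_self_pos.mpr hx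

theorem supp_subset (h : ConformalTo u v) : supp u ⊆ supp v :=
  fun x hx hvx => (h x hx).ne' (by rw [hvx, mul_zero])

theorem trans (huv : ConformalTo u v) (hvw : ConformalTo v w) : ConformalTo u w := by
  intro x hx
  have hpos := mul_pos (huv x hx) (hvw x (huv.supp_subset hx))
  exact pos_of_mul_pos_right (by linarith) (mul_self_nonneg (v x))

end ConformalTo

section MinimalSupport

variable {m E : Type*} [Fintype E]

def HasMinimalSupport (A : Matrix m E ℝ) (Q : E → ℝ) : Prop :=
  ∀ D : E → ℝ, A *ᵥ D = 0 → D ≠ 0 → supp D ⊆ supp Q → supp D = supp Q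

theorem HasMinimalSupport.linearIndepOn_col {A : Matrix m E ℝ} {Q : E → ℝ}
    (hQ : HasMinimalSupport A Q) {s : Set E} (hs : s ⊂ supp Q) : LinearIndepOn ℝ A.col s := by
  rw [linearIndepOn_iff]
  intro l hl hcomb
  have hker : A *ᵥ ⇑l = 0 := by
    rw [← hcomb]
    ext i
    simp [Finsupp.linearCombination_apply, Finsupp.sum_fintype, mulVec, dotProduct, mul_comm]
  have hsupp : supp ⇑l ⊆ s := fun x hx => hl (Finsupp.mem_support_iff.mpr hx)
  by_contra hl0
  have heq := hQ l hker (by rwa [Ne, Finsupp.coe_eq_zero]) (hsupp.trans hs.subset)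
  exact hs.not_subset (heq ▸ hsupp)

end MinimalSupport

theorem Matrix.IsTotallyUnimodular.abs_eq_of_hasMinimalSupport {m E : Type*} [Fintype m]
    [Fintype E] {A : Matrix m E ℝ} (hA : A.IsTotallyUnimodular) {Q : E → ℝ} (hQ : A *ᵥ Q = 0)
    (hmin : HasMinimalSupport A Q) {e f : E} (he : Q e ≠ 0) (hf : Q f ≠ 0) : |Q f| = |Q e| := by
  classical
  obtain rfl | hfe := eq_or_ne f e
  · rfl
  let S : Finset E := ({x | Q x ≠ 0} : Finset E).erase e
  have hS : (S : Set E) ⊂ supp Q := by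
    refine Set.ssubset_iff_of_subset (fun x hx => ?_) |>.mpr ⟨e, he, by simp [S]⟩
    simpa [S, supp] using Finset.mem_of_mem_erase hx
  obtain ⟨r, hr⟩ := (A.submatrix id ((↑) : S → E)).exists_isUnit_submatrix_of_linearIndependent_col
    (hmin.linearIndepOn_col hS)
  have hq : A.submatrix r (↑) *ᵥ (fun k : S => Q k) = (-Q e) • fun i => A (r i) e := by
    ext i
    have hrow : ∑ x, A (r i) x * Q x = A (r i) e * Q e + ∑ x ∈ S, A (r i) x * Q x := by
      rw [Finset.add_sum_erase _ (fun x => A (r i) x * Q x) (by simpa using he)]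
      exact (Finset.sum_subset (Finset.subset_univ _) fun x _ hx => by simp_all).symm
    have hker := congrFun hQ (r i)
    simp only [mulVec, dotProduct, Pi.zero_apply] at hker
    simp only [mulVec, dotProduct, submatrix_apply, Pi.smul_apply, smul_eq_mul,
      Finset.sum_coe_sort S (fun x => A (r i) x * Q x)]
    linarith
  exact (hA.abs_eq_of_mulVec_submatrix_eq ((isUnit_iff_isUnit_det _).mp hr).ne_zero hq
    (j := ⟨f, by simp [S, hf, hfe]⟩) hf).trans (abs_neg _)

theorem exists_conformalTo_sub_smul {E : Type*} [Fintype E] {Q D : E → ℝ} (hD : D ≠ 0)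
    (hDQ : supp D ⊆ supp Q) : ∃ t y, D y ≠ 0 ∧ Q y - t * D y = 0 ∧ ConformalTo (Q - t • D) Q := by
  classical
  obtain ⟨y, hy, hymin⟩ := Finset.exists_min_image ({x | D x ≠ 0} : Finset E)
    (fun x => |Q x| / |D x|) (by simpa [Finset.Nonempty, funext_iff] using hD)
  have hDy : D y ≠ 0 := by simpa using hy
  refine ⟨Q y / D y, y, hDy, by field_simp; ring, fun x hx => ?_⟩
  by_cases hDx : D x = 0
  · simpa [hDx] using hx
  have hQx : Q x ≠ 0 := hDQ hDx
  have hbound : |Q y / D y * D x| ≤ |Q x| := by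
    rw [abs_mul, abs_div, ← le_div_iff₀ (abs_pos.mpr hDx)]
    exact hymin x (by simpa using hDx)
  have hnonneg : 0 ≤ (Q - (Q y / D y) • D) x * Q x := by
    simp only [Pi.sub_apply, Pi.smul_apply, smul_eq_mul, sub_mul]
    linarith [abs_mul_abs_self (Q x), abs_mul (Q y / D y * D x) (Q x),
      le_abs_self (Q y / D y * D x * Q x), mul_le_mul_of_nonneg_right hbound (abs_nonneg (Q x))]
  exact hnonneg.lt_of_ne (mul_ne_zero hx hQx).symm

theorem Matrix.exists_hasMinimalSupport_conformalTo {m E : Type*} [Fintype E] (A : Matrix m E ℝ)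
    {Q : E → ℝ} (hQ : A *ᵥ Q = 0) (hQ0 : Q ≠ 0) :
    ∃ C, A *ᵥ C = 0 ∧ C ≠ 0 ∧ HasMinimalSupport A C ∧ ConformalTo C Q := by
  induction hS : supp Q using WellFoundedLT.induction generalizing Q with
  | _ S ih =>
  subst hS
  by_cases hmin : HasMinimalSupport A Q
  · exact ⟨Q, hQ, hQ0, hmin, .refl Q⟩
  obtain ⟨D, hD, hD0, hDQ, hne⟩ : ∃ D, A *ᵥ D = 0 ∧ D ≠ 0 ∧ supp D ⊆ supp Q ∧ supp D ≠ supp Q := by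
    simpa [HasMinimalSupport] using hmin
  obtain ⟨x₀, hx₀Q, hx₀D⟩ := Set.exists_of_ssubset (hDQ.ssubset_of_ne hne)
  obtain ⟨t, y, hDy, hy, hconf⟩ := exists_conformalTo_sub_smul hD0 hDQ
  have hx₀ : (Q - t • D) x₀ = Q x₀ := by simp_all [supp]
  have hlt : supp (Q - t • D) ⊂ supp Q :=
    Set.ssubset_iff_of_subset hconf.supp_subset |>.mpr ⟨y, hDQ hDy, by simpa [supp] using hy⟩
  obtain ⟨C, hC, hC0, hCmin, hCconf⟩ := ih _ hlt (by simp [mulVec_sub, mulVec_smul, hQ, hD])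
    (fun h => hx₀Q (by rw [← hx₀, h, Pi.zero_apply])) rfl
  exact ⟨C, hC, hC0, hCmin, hCconf.trans hconf⟩

theorem eq_abs_mul_of_mul_pos {R : Type*} [Ring R] [LinearOrder R] [IsStrictOrderedRing R]
    {a p : R} (hp : p = -1 ∨ p = 0 ∨ p = 1) (h : 0 < a * p) : a = |a| * p := by
  rcases hp with rfl | rfl | rfl
  · rw [abs_of_neg (by simpa using h), mul_neg_one, neg_neg]
  · simp at h
  · rw [abs_of_pos (by simpa using h), mul_one]

theorem Matrix.IsTotallyUnimodular.exists_signedCircuit_eq_on_supp {m E : Type*} [Fintype m]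
    [Fintype E] {A : Matrix m E ℝ} (hA : A.IsTotallyUnimodular) {P : E → ℝ} (hP : A *ᵥ P = 0)
    (hPs : Simple P) (hP0 : P ≠ 0) : ∃ C, SignedCircuit A C ∧ ∀ x ∈ supp C, C x = P x := by
  obtain ⟨Q, hQ, hQ0, hmin, hconf⟩ := A.exists_hasMinimalSupport_conformalTo hP hP0
  obtain ⟨e, he⟩ := Function.ne_iff.mp hQ0
  have hscale : |Q e|⁻¹ ≠ 0 := inv_ne_zero (abs_ne_zero.mpr he)
  have hsupp : supp (|Q e|⁻¹ • Q) = supp Q := by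
    ext x; simp [supp, hscale]
  have hCP : ∀ x ∈ supp Q, (|Q e|⁻¹ • Q) x = P x := fun x hx => by
    rw [Pi.smul_apply, smul_eq_mul, eq_abs_mul_of_mul_pos (hPs x) (hconf x hx),
      hA.abs_eq_of_hasMinimalSupport hQ hmin he hx, inv_mul_cancel_left₀ (abs_ne_zero.mpr he)]
  refine ⟨|Q e|⁻¹ • Q, ⟨by rw [mulVec_smul, hQ, smul_zero], ?_, fun x => ?_, ?_⟩, hsupp ▸ hCP⟩
  · exact fun h => he (by simpa [hscale] using congrFun h e)
  · by_cases hx : Q x = 0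
    · simp [hx]
    · exact hCP x hx ▸ hPs x
  · exact hsupp ▸ hmin

theorem sub_eq_indicator_compl_of_eq_on_supp {α : Type*} {P C : α → ℝ}
    (h : ∀ x ∈ supp C, C x = P x) : P - C = (supp C)ᶜ.indicator P := by
  ext x
  by_cases hx : x ∈ supp C
  · simp [hx, h x hx]
  · simp_all [supp]

def IsConformalCircuitDecomposition {m E : Type*} [Fintype E] (A : Matrix m E ℝ) (P : E → ℝ)
    {n : ℕ} (c : Fin n → E → ℝ) : Prop :=
  (∀ i, SignedCircuit A (c i)) ∧ (Pairwise fun i j => supp (c i) ∩ supp (c j) = ∅) ∧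
    (∀ i, ∀ x ∈ supp (c i), c i x = P x) ∧ P = ∑ i, c i

namespace IsConformalCircuitDecomposition

variable {m E : Type*} [Fintype E] {A : Matrix m E ℝ}

theorem zero : IsConformalCircuitDecomposition A 0 (Fin.elim0 : Fin 0 → E → ℝ) :=
  ⟨fun i => i.elim0, fun i => i.elim0, fun i => i.elim0, by simp⟩

theorem cons {P C : E → ℝ} {n : ℕ} {c : Fin n → E → ℝ} (hC : SignedCircuit A C)
    (hCP : ∀ x ∈ supp C, C x = P x) (hc : IsConformalCircuitDecomposition A (P - C) c) :
    IsConformalCircuitDecomposition A P (Fin.cons C c) := by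
  obtain ⟨hcirc, hdisj, hconf, hsum⟩ := hc
  rw [sub_eq_indicator_compl_of_eq_on_supp hCP] at hconf hsum
  have hsub : ∀ i, supp (c i) ⊆ (supp C)ᶜ := fun i x hx hxC => hx (by
    rw [hconf i x hx, Set.indicator_of_notMem (not_not.mpr hxC)])
  have hdisjC : ∀ i, supp C ∩ supp (c i) = ∅ := fun i =>
    Set.disjoint_iff_inter_eq_empty.mp (disjoint_compl_right.mono_right (hsub i))
  refine ⟨Fin.cases hC hcirc, fun i j hij => ?_, Fin.cases hCP fun i x hx => ?_, ?_⟩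
  · induction i using Fin.cases <;> induction j using Fin.cases
    · exact absurd rfl hij
    · simpa using hdisjC _
    · simpa [Set.inter_comm] using hdisjC _
    · simpa using hdisj (Fin.succ_injective _ |>.ne_iff.mp hij)
  · rw [Fin.sum_cons, ← hsum, ← sub_eq_indicator_compl_of_eq_on_supp hCP, add_sub_cancel]
  · rw [Fin.cons_succ, hconf i x hx, Set.indicator_of_mem (hsub i hx)]

end IsConformalCircuitDecomposition

theorem simple_kernel_vector_decomposes_into_disjoint_conformal_circuits
    {m E : Type*} [Fintype m] [Fintype E] (A : Matrix m E ℝ)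
    (hA : A.IsTotallyUnimodular) (P : E → ℝ) (hP : A.mulVec P = 0) (hPs : Simple P) :
    ∃ (n : ℕ) (c : Fin n → (E → ℝ)),
      (∀ i, SignedCircuit A (c i)) ∧
      (Pairwise fun i j => supp (c i) ∩ supp (c j) = ∅) ∧
      (∀ i, ∀ x ∈ supp (c i), c i x = P x) ∧
      P = ∑ i, c i := by
  suffices ∃ (n : ℕ) (c : Fin n → (E → ℝ)), IsConformalCircuitDecomposition A P c from this
  induction hS : supp P using WellFoundedLT.induction generalizing P with
  | _ S ih =>
  subst hS
  obtain rfl | hP0 := eq_or_ne P 0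
  · exact ⟨0, _, .zero⟩
  obtain ⟨C, hC, hCP⟩ := hA.exists_signedCircuit_eq_on_supp hP hPs hP0
  have hrest := sub_eq_indicator_compl_of_eq_on_supp hCP
  have hlt : supp (P - C) ⊂ supp P := by
    obtain ⟨e, he⟩ := Function.ne_iff.mp hC.2.1
    rw [hrest, supp_eq_support, Set.support_indicator]
    exact Set.ssubset_iff_of_subset Set.inter_subset_right |>.mpr
      ⟨e, Function.mem_support.mpr (hCP e he ▸ he), fun h => h.1 he⟩
  obtain ⟨n, c, hc⟩ := ih _ hlt (P - C) (by rw [mulVec_sub, hP, hC.1, sub_zero])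
    (hrest ▸ hPs.indicator _) rfl
  exact ⟨n + 1, _, hc.cons hC hCP⟩
end

section
/- Let e, f be distinct elements of the ground set E of a regular matroid realized by a totally unimodular matrix, let C be a signed circuit, C* a signed cocircuit, and O an orientation of E. Suppose e ∈ supp(C) ∩ supp(C*), the restriction of C to E∖{f} is compatible with O, and the restriction of C* to E∖{f} is compatible with O. Then supp(C) ∩ supp(C*) = {e, f}. -/
open Matrix

theorem circuit_cocircuit_intersection_is_pair
    {m E : Type*} [Fintype m] [Fintype E] (A : Matrix m E ℝ)
    (hA : A.IsTotallyUnimodular) (C D O : E → ℝ) (e f : E) (hef : e ≠ f)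
    (hC : SignedCircuit A C) (hD : SignedCocircuit A D)
    (hO : ∀ x, O x = 1 ∨ O x = -1)
    (he : e ∈ supp C ∩ supp D)
    (hCc : ∀ x, x ≠ f → C x = 0 ∨ C x = O x)
    (hDc : ∀ x, x ≠ f → D x = 0 ∨ D x = O x) :
    supp C ∩ supp D = {e, f} := by
  classical
  obtain ⟨y, hy⟩ := hD.1
  have hAC : A.mulVec C = 0 := hC.1
  -- orthogonality
  have horth : ∑ x, D x * C x = 0 := by
    have h := Matrix.dotProduct_mulVec y A C
    rw [hAC, hy] at h
    simpa [dotProduct] using h.symm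
  set g : E → ℝ := fun x => D x * C x with hg
  have h1 : ∀ x, x ≠ f → x ∈ supp C ∩ supp D → g x = 1 := by
    intro x hx hxS
    obtain ⟨hxC, hxD⟩ := hxS
    have hC' := (hCc x hx).resolve_left hxC
    have hD' := (hDc x hx).resolve_left hxD
    simp only [hg, hC', hD']
    rcases hO x with h | h <;> rw [h] <;> norm_num
  have h0 : ∀ x, x ∉ supp C ∩ supp D → g x = 0 := by
    intro x hxS
    simp only [Set.mem_inter_iff, supp, Set.mem_setOf_eq, not_and_or, not_not] at hxS
    rcases hxS with h | h <;> simp [hg, h]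
  have hfge : -1 ≤ g f := by
    rcases hC.2.2.1 f with h | h | h <;> rcases hD.2.2.1 f with h' | h' | h' <;>
      simp [hg, h, h'] <;> norm_num
  have he1 : g e = 1 := h1 e hef he
  have hfe : f ≠ e := hef.symm
  have hsplit : ∑ x, g x =
      g e + (g f + ∑ x ∈ (Finset.univ.erase e).erase f, g x) := by
    rw [Finset.add_sum_erase _ g (Finset.mem_erase.mpr ⟨hfe, Finset.mem_univ f⟩),
      Finset.add_sum_erase _ g (Finset.mem_univ e)]
  have hrest_nonneg : ∀ x ∈ (Finset.univ.erase e).erase f, 0 ≤ g x := by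
    intro x hx
    have hxf : x ≠ f := (Finset.mem_erase.mp hx).1
    by_cases hxS : x ∈ supp C ∩ supp D
    · rw [h1 x hxf hxS]; norm_num
    · rw [h0 x hxS]
  have hsum_nonneg : 0 ≤ ∑ x ∈ (Finset.univ.erase e).erase f, g x :=
    Finset.sum_nonneg hrest_nonneg
  have hkey : g f + ∑ x ∈ (Finset.univ.erase e).erase f, g x = -1 := by
    rw [hsplit, he1] at horth; linarith
  have hrest0 : ∑ x ∈ (Finset.univ.erase e).erase f, g x = 0 := by linarith
  have hgf : g f = -1 := by linarith
  have hterm0 : ∀ x ∈ (Finset.univ.erase e).erase f, g x = 0 :=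
    (Finset.sum_eq_zero_iff_of_nonneg hrest_nonneg).mp hrest0
  have hfS : f ∈ supp C ∩ supp D := by
    by_contra h
    rw [h0 f h] at hgf; norm_num at hgf
  ext x
  simp only [Set.mem_insert_iff, Set.mem_singleton_iff]
  constructor
  · intro hxS
    by_contra hne
    push_neg at hne
    have hx : x ∈ (Finset.univ.erase e).erase f :=
      Finset.mem_erase.mpr ⟨hne.2, Finset.mem_erase.mpr ⟨hne.1, Finset.mem_univ x⟩⟩
    have := hterm0 x hx
    rw [h1 x hne.2 hxS] at this; norm_num at this
  · rintro (rfl | rfl)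
    · exact he
    · exact hfS
end

section
/- Let M be a regular matroid with an acyclic circuit signature σ (a choice, for each circuit, of one of its two signed versions, such that no nonzero nonnegative linear combination of the chosen signed circuits equals zero). Then for any element e of the ground set that is not a coloop, the deletion signature σ∖e = {C∖e : C ∈ σ} ∩ SignedCircuits(M∖e) is an acyclic circuit signature of M∖e. -/
open Matrix

open scoped Classical

/-- Restriction of a vector to the coordinates other than `e`. -/
def restr {E : Type*} (e : E) (C : E → ℝ) : {x : E // x ≠ e} → ℝ := fun x => C x.1

/-- `σ` is a signature for the collection `SC` of signed circuits (or cocircuits):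
it consists of members of `SC` and, for each member of `SC`, contains exactly one of
the two opposite signed versions. -/
def SigOf {α : Type*} (SC : Set (α → ℝ)) (σ : Set (α → ℝ)) : Prop :=
  σ ⊆ SC ∧ ∀ C ∈ SC, Xor' (C ∈ σ) (-C ∈ σ)

/-- A signature is acyclic if no nonzero nonnegative linear combination of its
members vanishes. -/
def AcyclicSig {α : Type*} (σ : Set (α → ℝ)) : Prop :=
  ∀ S : Finset (α → ℝ), ↑S ⊆ σ → ∀ lam : (α → ℝ) → ℝ,
    (∀ C ∈ S, 0 ≤ lam C) → ∑ C ∈ S, lam C • C = 0 → ∀ C ∈ S, lam C = 0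

/-- The signed circuits of the contraction `M/e`: the support-minimal nonzero
restrictions of signed circuits of `M`. -/
def SCContr {m E : Type*} [Fintype E] (A : Matrix m E ℝ) (e : E) :
    Set ({x : E // x ≠ e} → ℝ) :=
  {D | (∃ C, SignedCircuit A C ∧ restr e C = D) ∧ D ≠ 0 ∧
    ∀ D' : {x : E // x ≠ e} → ℝ, (∃ C', SignedCircuit A C' ∧ restr e C' = D') →
      D' ≠ 0 → supp D' ⊆ supp D → supp D' = supp D}

/-- The signed circuits of the deletion `M∖e`: restrictions of signed circuits of `M`
vanishing at `e`. -/
def SCDel {m E : Type*} [Fintype E] (A : Matrix m E ℝ) (e : E) :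
    Set ({x : E // x ≠ e} → ℝ) :=
  {D | ∃ C, SignedCircuit A C ∧ C e = 0 ∧ restr e C = D}

/-- The signed cocircuits of the contraction `M/e`: restrictions of signed cocircuits
of `M` vanishing at `e`. -/
def SCstarContr {m E : Type*} [Fintype m] (A : Matrix m E ℝ) (e : E) :
    Set ({x : E // x ≠ e} → ℝ) :=
  {D | ∃ C, SignedCocircuit A C ∧ C e = 0 ∧ restr e C = D}

/-- The signed cocircuits of the deletion `M∖e`: the support-minimal nonzero
restrictions of signed cocircuits of `M`. -/
def SCstarDel {m E : Type*} [Fintype m] (A : Matrix m E ℝ) (e : E) :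
    Set ({x : E // x ≠ e} → ℝ) :=
  {D | (∃ C, SignedCocircuit A C ∧ restr e C = D) ∧ D ≠ 0 ∧
    ∀ D' : {x : E // x ≠ e} → ℝ, (∃ C', SignedCocircuit A C' ∧ restr e C' = D') →
      D' ≠ 0 → supp D' ⊆ supp D → supp D' = supp D}

/-- Deletion/contraction of a signature: restrict the members and keep those that are
signed circuits (resp. cocircuits) of the minor, whose collection is `SC'`. -/
def minorSig {E : Type*} (e : E) (σ : Set (E → ℝ)) (SC' : Set ({x : E // x ≠ e} → ℝ)) :
    Set ({x : E // x ≠ e} → ℝ) :=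
  {D | ∃ C ∈ σ, restr e C = D} ∩ SC'

/-- `B` indexes a basis of the column space of `A` (i.e. a basis of the regular
matroid realized by `A`). -/
def IsBasisSet {m E : Type*} (A : Matrix m E ℝ) (B : Set E) : Prop :=
  LinearIndependent ℝ (fun x : B => fun i => A i x.1) ∧
    ∀ y : E, (fun i => A i y) ∈ Submodule.span ℝ (Set.range fun x : B => fun i => A i x.1)

/-- The fourientation associated to a basis `B` and a circuit signature `σ`:
elements of `B` are bi-oriented, and each `x ∉ B` is oriented by the sign given by
the member of `σ` supported on the fundamental circuit of `x` with respect to `B`. -/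
noncomputable def Fb {α : Type*} (σ : Set (α → ℝ)) (B : Set α) (x : α) : Set ℝ :=
  if x ∈ B then ({-1, 1} : Set ℝ)
  else {c | ∃ C ∈ σ, x ∈ supp C ∧ supp C ⊆ B ∪ {x} ∧ c = C x}

/-- Compatibility of a simple 1-chain with a fourientation. -/
def CompatF {α : Type*} (C : α → ℝ) (F : α → Set ℝ) : Prop :=
  ∀ x, C x ≠ 0 → C x ∈ F x

/-- Pointwise negation of a fourientation. -/
def negF {α : Type*} (F : α → Set ℝ) : α → Set ℝ := fun x => (fun s : ℝ => -s) '' F x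

/-- A circuit signature `σ` (for circuit collection `SC` and basis collection
`Bases`) is triangulating if for distinct bases `B₁ ≠ B₂` the fourientation
`F(B₁,σ) ∩ -F(B₂,σ)` is compatible with no signed circuit. -/
def Triang {α : Type*} (SC : Set (α → ℝ)) (Bases : Set (Set α)) (σ : Set (α → ℝ)) :
    Prop :=
  ∀ B₁ ∈ Bases, ∀ B₂ ∈ Bases, B₁ ≠ B₂ → ∀ C ∈ SC,
    ¬ CompatF C (fun x => Fb σ B₁ x ∩ negF (Fb σ B₂) x)

/-- A cocircuit signature `σ*` is triangulating if for distinct bases `B₁ ≠ B₂` the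
fourientation `F(B₁,σ*) ∩ -F(B₂,σ*)` is compatible with no signed cocircuit; here
`F(B,σ*)` bi-orients the complement of `B`. -/
def TriangCo {α : Type*} (SCstar : Set (α → ℝ)) (Bases : Set (Set α))
    (σs : Set (α → ℝ)) : Prop :=
  ∀ B₁ ∈ Bases, ∀ B₂ ∈ Bases, B₁ ≠ B₂ → ∀ D ∈ SCstar,
    ¬ CompatF D (fun x => Fb σs B₁ᶜ x ∩ negF (Fb σs B₂ᶜ) x)

/-! Extending by zero along the inclusion `E ∖ {e} ↪ E` is an injective linear map commuting
with negation, and it maps signed circuits of `M∖e` to signed circuits of `M`; a member of `σ` whose restriction is a signed circuit of `M∖e` already vanishes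
at `e`, by minimality of its support. Hence `σ∖e` is the preimage of `σ` under this map, and
both the signature property and acyclicity pass to such preimages. -/

open Function

section ExtendByZero

variable {ι E : Type*} {s : ι → E}

theorem supp_extend_zero (hs : Injective s) (D : ι → ℝ) :
    supp (extend s D 0) = s '' supp D := by
  ext x
  by_cases hx : ∃ a, s a = x
  · obtain ⟨a, rfl⟩ := hx
    simp [supp, hs.extend_apply, hs.eq_iff]
  · show extend s D 0 x ≠ 0 ↔ ∃ a ∈ supp D, s a = x
    rw [extend_apply' _ _ _ hx]
    simpa using fun a _ h => hx ⟨a, h⟩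

theorem extend_comp_eq_self_of_supp_subset (hs : Injective s) {C : E → ℝ}
    (hC : supp C ⊆ Set.range s) : extend s (C ∘ s) 0 = C := by
  funext x
  by_cases hx : ∃ a, s a = x
  · obtain ⟨a, rfl⟩ := hx
    exact hs.extend_apply _ _ a
  · rw [extend_apply' _ _ _ hx]
    by_contra h
    exact hx (hC (Ne.symm h))

theorem simple_extend_zero (hs : Injective s) {D : ι → ℝ} (hD : Simple D) :
    Simple (extend s D 0) := by
  intro x
  by_cases hx : ∃ a, s a = x
  · obtain ⟨a, rfl⟩ := hx
    rw [hs.extend_apply]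
    exact hD a
  · simp [extend_apply' _ _ _ hx]

theorem mulVec_extend_zero {m : Type*} [Fintype ι] [Fintype E] (hs : Injective s)
    (A : Matrix m E ℝ) (D : ι → ℝ) :
    A *ᵥ extend s D 0 = A.submatrix id s *ᵥ D := by
  funext i
  refine (Fintype.sum_of_injective s hs _ _ (fun x hx => ?_) fun a => ?_).symm
  · simp [extend_apply' _ _ _ hx]
  · simp [hs.extend_apply]

end ExtendByZero

namespace SignedCircuit

variable {m ι E : Type*} [Fintype ι] [Fintype E] {A : Matrix m E ℝ} {s : ι → E}

theorem neg {C : E → ℝ} (hC : SignedCircuit A C) : SignedCircuit A (-C) := by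
  obtain ⟨hker, hne, hsimple, hmin⟩ := hC
  refine ⟨by rw [mulVec_neg, hker, neg_zero], neg_ne_zero.mpr hne, fun x => ?_, ?_⟩
  · rcases hsimple x with h | h | h <;> simp [h]
  · have hsupp : supp (-C) = supp C := by ext x; simp [supp]
    simpa only [hsupp] using hmin

theorem extend_of_submatrix (hs : Injective s) {D : ι → ℝ}
    (hD : SignedCircuit (A.submatrix id s) D) : SignedCircuit A (extend s D 0) := by
  obtain ⟨hker, hne, hsimple, hmin⟩ := hD
  have hne' : extend s D 0 ≠ 0 := fun h =>
    hne (extend_injective hs (0 : E → ℝ) (h.trans (extend_zero s).symm))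
  refine ⟨by rw [mulVec_extend_zero hs, hker], hne', simple_extend_zero hs hsimple, ?_⟩
  intro C hCker hCne hCsupp
  rw [supp_extend_zero hs] at hCsupp ⊢
  have hC : extend s (C ∘ s) 0 = C :=
    extend_comp_eq_self_of_supp_subset hs (hCsupp.trans (Set.image_subset_range _ _))
  have hCs : supp (C ∘ s) = supp D := by
    refine hmin _ ?_ (fun h => hCne ?_) ?_
    · rw [← mulVec_extend_zero hs, hC, hCker]
    · rw [← hC, h, extend_zero]
    · exact (Set.preimage_mono hCsupp).trans (Set.preimage_image_eq _ hs).le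
  rw [← hCs, ← hC, supp_extend_zero hs, hC]

/-- Otherwise the part of `C` off `range s` would be a nonzero kernel vector whose support
misses the points where `C ∘ s ≠ 0`, contradicting minimality of `supp C`. -/
theorem extend_comp_eq (hs : Injective s) {C : E → ℝ} (hC : SignedCircuit A C)
    (hker : A.submatrix id s *ᵥ (C ∘ s) = 0) (hne : C ∘ s ≠ 0) :
    extend s (C ∘ s) 0 = C := by
  obtain ⟨hCker, -, -, hmin⟩ := hC
  by_contra hCR
  set R := extend s (C ∘ s) 0
  have hR_on : ∀ a, (C - R) (s a) = 0 := fun a => by simp [R, hs.extend_apply]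
  have hsupp : supp (C - R) ⊆ supp C := by
    intro x hx
    by_cases hrange : ∃ a, s a = x
    · obtain ⟨a, rfl⟩ := hrange
      exact absurd (hR_on a) hx
    · simpa [supp, R, extend_apply' _ _ _ hrange] using hx
  have heq := hmin (C - R) (by rw [mulVec_sub, hCker, mulVec_extend_zero hs, hker, sub_zero])
    (sub_ne_zero.mpr (Ne.symm hCR)) hsupp
  obtain ⟨a, ha⟩ := ne_iff.mp hne
  have hsa : s a ∈ supp (C - R) := heq ▸ ha
  exact hsa (hR_on a)

end SignedCircuit

section Signatures

variable {α β : Type*}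

theorem SigOf.inter_preimage {SC σ : Set (α → ℝ)} (hσ : SigOf SC σ) {SC' : Set (β → ℝ)}
    (hSC' : ∀ D ∈ SC', -D ∈ SC') (f : (β → ℝ) → (α → ℝ)) (hf_neg : ∀ D, f (-D) = -f D)
    (hf : ∀ D ∈ SC', f D ∈ SC) : SigOf SC' (SC' ∩ f ⁻¹' σ) := by
  refine ⟨Set.inter_subset_left, fun D hD => ?_⟩
  have hxor := hσ.2 (f D) (hf D hD)
  simp only [Set.mem_inter_iff, Set.mem_preimage, hD, hSC' D hD, true_and, hf_neg]
  exact hxor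

theorem AcyclicSig.mono {σ τ : Set (α → ℝ)} (hσ : AcyclicSig σ) (hτ : τ ⊆ σ) :
    AcyclicSig τ :=
  fun S hS => hσ S (hS.trans hτ)

theorem AcyclicSig.preimage {σ : Set (α → ℝ)} (hσ : AcyclicSig σ)
    (f : (β → ℝ) →ₗ[ℝ] (α → ℝ)) (hf : Injective f) : AcyclicSig (f ⁻¹' σ) := by
  intro S hS lam hlam hsum D hD
  have hcomp : ∀ D, lam (invFun f (f D)) = lam D := fun D => by rw [leftInverse_invFun hf D]
  have hsum' : ∑ C ∈ S.image f, lam (invFun f C) • C = 0 := by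
    rw [Finset.sum_image hf.injOn]
    simp only [hcomp, ← map_smul, ← map_sum, hsum, map_zero]
  have := hσ (S.image f) (by simpa using hS) (fun C => lam (invFun f C))
    (by simpa [hcomp] using hlam) hsum' (f D) (Finset.mem_image_of_mem f hD)
  rwa [hcomp] at this

end Signatures

theorem minorSig_eq_inter_preimage {m E : Type*} [Fintype E] [DecidableEq E]
    {A : Matrix m E ℝ} {e : E} {σ : Set (E → ℝ)} (hσ : σ ⊆ {C | SignedCircuit A C}) :
    minorSig e σ {D | SignedCircuit (A.submatrix id (Subtype.val : {x : E // x ≠ e} → E)) D} =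
      {D | SignedCircuit (A.submatrix id Subtype.val) D} ∩
        (fun D => extend Subtype.val D 0) ⁻¹' σ := by
  ext D
  constructor
  · rintro ⟨⟨C, hCσ, rfl⟩, hD⟩
    refine ⟨hD, ?_⟩
    show extend Subtype.val (C ∘ Subtype.val) 0 ∈ σ
    rwa [(hσ hCσ).extend_comp_eq Subtype.val_injective hD.1 hD.2.1]
  · rintro ⟨hD, hDσ⟩
    exact ⟨⟨_, hDσ, extend_comp Subtype.val_injective D 0⟩, hD⟩

theorem acyclic_circuit_signature_deletion_general
    {m E : Type*} [Fintype E] [DecidableEq E] (A : Matrix m E ℝ)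
    (e : E)
    (σ : Set (E → ℝ)) (hσ : SigOf {C | SignedCircuit A C} σ) (hac : AcyclicSig σ) :
    SigOf {C | SignedCircuit (A.submatrix id (Subtype.val : {x : E // x ≠ e} → E)) C}
      (minorSig e σ
        {C | SignedCircuit (A.submatrix id (Subtype.val : {x : E // x ≠ e} → E)) C}) ∧
    AcyclicSig (minorSig e σ
      {C | SignedCircuit (A.submatrix id (Subtype.val : {x : E // x ≠ e} → E)) C}) := by
  have hs : Injective (Subtype.val : {x : E // x ≠ e} → E) := Subtype.val_injective
  set f := ExtendByZero.linearMap ℝ (Subtype.val : {x : E // x ≠ e} → E)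
  rw [minorSig_eq_inter_preimage hσ.1]
  constructor
  · refine hσ.inter_preimage ?_ f f.map_neg ?_
    · exact fun _ => SignedCircuit.neg
    · exact fun _ => SignedCircuit.extend_of_submatrix hs
  · exact (hac.preimage f (extend_injective hs _)).mono Set.inter_subset_right

theorem acyclic_circuit_signature_deletion
    {m E : Type*} [Fintype m] [Fintype E] [DecidableEq E] (A : Matrix m E ℝ)
    (hA : A.IsTotallyUnimodular) (e : E)
    (hcoloop : ¬ ∃ w : E → ℝ, (∃ y, Matrix.vecMul y A = w) ∧ w ≠ 0 ∧ supp w = {e})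
    (σ : Set (E → ℝ)) (hσ : SigOf {C | SignedCircuit A C} σ) (hac : AcyclicSig σ) :
    SigOf {C | SignedCircuit (A.submatrix id (Subtype.val : {x : E // x ≠ e} → E)) C}
      (minorSig e σ
        {C | SignedCircuit (A.submatrix id (Subtype.val : {x : E // x ≠ e} → E)) C}) ∧
    AcyclicSig (minorSig e σ
      {C | SignedCircuit (A.submatrix id (Subtype.val : {x : E // x ≠ e} → E)) C}) :=
  acyclic_circuit_signature_deletion_general A e σ hσ hac
end

section
/- Let M be a regular matroid realized by a totally unimodular matrix A, with ground set E, and let e ∈ E be a non-loop element. Let σ be an acyclic circuit signature of M. Then the contraction signature σ/e = {C∖e : C ∈ σ} ∩ SignedCircuits(M/e) is an acyclic circuit signature of M/e. -/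
open Matrix

open scoped Classical

lemma supp_neg {α : Type*} (v : α → ℝ) : supp (-v) = supp v := by
  ext x; simp [supp]

lemma restr_neg {E : Type*} (e : E) (C : E → ℝ) : restr e (-C) = -(restr e C) := rfl

lemma SignedCircuit.neg' {m E : Type*} [Fintype E] {A : Matrix m E ℝ} {C : E → ℝ}
    (h : SignedCircuit A C) : SignedCircuit A (-C) := by
  obtain ⟨h1, h2, h3, h4⟩ := h
  refine ⟨by rw [Matrix.mulVec_neg, h1]; simp, by simpa using h2, ?_, ?_⟩
  · intro x; rcases h3 x with h | h | h <;> simp [h]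
  · intro D hD hD0 hsub
    rw [supp_neg] at hsub ⊢
    exact h4 D hD hD0 hsub

lemma ker_supp_single {m E : Type*} [Fintype E] (A : Matrix m E ℝ) (e : E)
    (hloop : (fun i => A i e) ≠ 0) (v : E → ℝ) (hv : A.mulVec v = 0)
    (hs : ∀ x, x ≠ e → v x = 0) : v = 0 := by
  have hve : v e = 0 := by
    by_contra h
    apply hloop
    funext i
    have h2 := congrFun hv i
    rw [Matrix.mulVec, dotProduct] at h2
    rw [Finset.sum_eq_single e (fun b _ hb => by rw [hs b hb, mul_zero])
      (fun hb => absurd (Finset.mem_univ e) hb)] at h2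
    have : A i e = 0 := by
      rcases mul_eq_zero.1 h2 with h' | h'
      · exact h'
      · exact absurd h' h
    simpa using this
  funext x
  by_cases hx : x = e
  · subst hx; exact hve
  · exact hs x hx

theorem acyclic_circuit_signature_contraction
    {m E : Type*} [Fintype m] [Fintype E] [DecidableEq E] (A : Matrix m E ℝ)
    (hA : A.IsTotallyUnimodular) (e : E) (hloop : (fun i => A i e) ≠ 0)
    (σ : Set (E → ℝ)) (hσ : SigOf {C | SignedCircuit A C} σ) (hac : AcyclicSig σ) :
    SigOf (SCContr A e) (minorSig e σ (SCContr A e)) ∧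
    AcyclicSig (minorSig e σ (SCContr A e)) := by
  -- General fact: a kernel vector supported on {e} is zero (e is not a loop).
  have notboth : ∀ D : {x : E // x ≠ e} → ℝ, D ≠ 0 →
      ¬ (D ∈ minorSig e σ (SCContr A e) ∧ -D ∈ minorSig e σ (SCContr A e)) := by
    rintro D hD0 ⟨⟨⟨C₁, hC₁σ, h1⟩, _⟩, ⟨⟨C₂, hC₂σ, h2⟩, _⟩⟩
    have hc1 := hσ.1 hC₁σ
    have hc2 := hσ.1 hC₂σ
    have hker : A.mulVec (C₁ + C₂) = 0 := by
      rw [Matrix.mulVec_add, hc1.1, hc2.1]; simp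
    have hsupp : ∀ x, x ≠ e → (C₁ + C₂) x = 0 := by
      intro x hx
      have e1 := congrFun h1 ⟨x, hx⟩
      have e2 := congrFun h2 ⟨x, hx⟩
      simp only [restr, Pi.neg_apply] at e1 e2
      simp only [Pi.add_apply, e1, e2]
      ring
    have hz := ker_supp_single A e hloop _ hker hsupp
    have hC₂ : C₂ = -C₁ := by
      have := eq_neg_of_add_eq_zero_right hz
      rw [← this]
    rcases hσ.2 C₁ hc1 with ⟨_, hn⟩ | ⟨_, hn⟩
    · exact hn (hC₂ ▸ hC₂σ)
    · exact hn hC₁σ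
  constructor
  · constructor
    · exact Set.inter_subset_right
    · rintro D ⟨⟨C, hC, hre⟩, hD0, hmin⟩
      have hDSC : D ∈ SCContr A e := ⟨⟨C, hC, hre⟩, hD0, hmin⟩
      rcases hσ.2 C hC with ⟨hCσ, _⟩ | ⟨hCσ, _⟩
      · have hmem : D ∈ minorSig e σ (SCContr A e) := ⟨⟨C, hCσ, hre⟩, hDSC⟩
        exact Or.inl ⟨hmem, fun hneg => notboth D hD0 ⟨hmem, hneg⟩⟩
      · have hmem : -D ∈ minorSig e σ (SCContr A e) := by
          refine ⟨⟨-C, hCσ, by rw [restr_neg, hre]⟩, ⟨-C, hC.neg', by rw [restr_neg, hre]⟩,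
            neg_ne_zero.2 hD0, ?_⟩
          intro D' hD' hD'0 hsub
          rw [supp_neg] at hsub ⊢
          exact hmin D' hD' hD'0 hsub
        refine Or.inr ⟨hmem, fun hpos => notboth D hD0 ⟨hpos, hmem⟩⟩
  · intro S hS lam hlam hsum
    classical
    set f : ({x : E // x ≠ e} → ℝ) → (E → ℝ) := fun D =>
      if h : ∃ C, C ∈ σ ∧ restr e C = D then h.choose else 0 with hf
    have hfspec : ∀ D ∈ S, f D ∈ σ ∧ restr e (f D) = D := by
      intro D hD
      obtain ⟨⟨C, hCσ, hre⟩, _⟩ := hS hD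
      have hex : ∃ C, C ∈ σ ∧ restr e C = D := ⟨C, hCσ, hre⟩
      simp only [hf, dif_pos hex]
      exact hex.choose_spec
    have hinj : ∀ x ∈ S, ∀ y ∈ S, f x = f y → x = y := by
      intro x hx y hy hxy
      have := (hfspec x hx).2
      rw [hxy, (hfspec y hy).2] at this
      exact this.symm
    set T := S.image f with hT
    set lam' : (E → ℝ) → ℝ := fun C => lam (restr e C) with hlam'
    have hTσ : ↑T ⊆ σ := by
      intro C hC
      simp only [hT, Finset.coe_image, Set.mem_image, Finset.mem_coe] at hC
      obtain ⟨D, hD, rfl⟩ := hC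
      exact (hfspec D hD).1
    have hsumT : ∑ C ∈ T, lam' C • C = ∑ D ∈ S, lam D • f D := by
      rw [hT, Finset.sum_image hinj]
      refine Finset.sum_congr rfl fun D hD => ?_
      rw [hlam']
      simp only [(hfspec D hD).2]
    have hker : A.mulVec (∑ D ∈ S, lam D • f D) = 0 := by
      have : A.mulVec (∑ D ∈ S, lam D • f D) =
          ∑ D ∈ S, lam D • A.mulVec (f D) := by
        rw [← A.mulVecLin_apply, map_sum]
        refine Finset.sum_congr rfl fun D _ => ?_
        rw [_root_.map_smul, A.mulVecLin_apply]
      rw [this]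
      refine Finset.sum_eq_zero fun D hD => ?_
      rw [(hσ.1 ((hfspec D hD).1)).1, smul_zero]
    have hsupp : ∀ x, x ≠ e → (∑ D ∈ S, lam D • f D) x = 0 := by
      intro x hx
      have h0 := congrFun hsum ⟨x, hx⟩
      rw [Finset.sum_apply] at h0 ⊢
      simp only [Pi.smul_apply, smul_eq_mul] at h0 ⊢
      rw [Pi.zero_apply] at h0
      rw [← h0]
      refine Finset.sum_congr rfl fun D hD => ?_
      have := congrFun (hfspec D hD).2 ⟨x, hx⟩
      simp only [restr] at this
      rw [this]
    have hz := ker_supp_single A e hloop _ hker hsupp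
    have hall := hac T hTσ lam'
      (by
        intro C hC
        simp only [hT, Finset.mem_image] at hC
        obtain ⟨D, hD, rfl⟩ := hC
        rw [hlam']
        simp only [(hfspec D hD).2]
        exact hlam D hD)
      (by rw [hsumT, hz])
    intro D hD
    have := hall (f D) (Finset.mem_image_of_mem f hD)
    rw [hlam'] at this
    simp only [(hfspec D hD).2] at this
    exact this
end

section
/- Let M be a regular matroid realized by a totally unimodular matrix A, let C* be a signed cocircuit of M, and let e be a non-loop element of the ground set. Then the restriction C*∖e (to coordinates other than e), if nonzero, can be written as a sum of signed cocircuits of M∖e with pairwise disjoint supports, each agreeing in sign with C*∖e on its support. -/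
open Matrix

/-!
Restricted to `E ∖ {e}`, the cocircuit `D` is a `{-1,0,1}`-vector in the row space of the
totally unimodular matrix `A ∖ e`, so it suffices to decompose such vectors `v`. Among the
nonzero row-space vectors conforming to `v` (having the sign of `v` wherever they are nonzero),
one of minimal support is elementary: subtracting the right multiple of a vector of smaller
support would shrink it further while keeping it conformal. By Cramer's rule on a nonsingular
square submatrix, the nonzero entries of an elementary vector of a totally unimodular row space
all have the same absolute value, so after scaling it is a signed cocircuit, which then agrees
with `v` on its support. Subtract it and induct on the size of the support.
-/

namespace Matrix

section RowSpace

variable {R m F : Type*} [CommSemiring R] [Fintype m]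

def rowSpace (B : Matrix m F R) : Submodule R (F → R) := LinearMap.range B.vecMulLinear

theorem mem_rowSpace {B : Matrix m F R} {z : F → R} : z ∈ B.rowSpace ↔ ∃ y, y ᵥ* B = z :=
  Iff.rfl

theorem mem_rowSpace_iff_exists_dual {B : Matrix m F R} {z : F → R} :
    z ∈ B.rowSpace ↔ ∃ f : Module.Dual R (m → R), ∀ x, f (B.col x) = z x := by
  classical
  rw [mem_rowSpace]
  constructor
  · rintro ⟨y, rfl⟩
    exact ⟨dotProductEquiv R m y, fun x => rfl⟩
  · rintro ⟨f, hf⟩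
    obtain ⟨y, rfl⟩ := (dotProductEquiv R m).surjective f
    exact ⟨y, funext hf⟩

end RowSpace

section TotallyUnimodular

variable {K m : Type*} [Field K] [Fintype m]

theorem exists_isUnit_submatrix_of_linearIndependent_col_s9 {ι : Type*} [Fintype ι] [DecidableEq ι]
    {M : Matrix m ι K} (hM : LinearIndependent K M.col) :
    ∃ R : ι → m, IsUnit (M.submatrix R id) := by
  have hspan : Submodule.span K (Set.range M.row) = ⊤ := by
    apply Submodule.eq_top_of_finrank_eq
    rw [← rank_eq_finrank_span_row, rank_eq_finrank_span_cols, finrank_span_eq_card hM,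
      Module.finrank_fintype_fun_eq_card]
  obtain ⟨κ, a, -, hspan', hli⟩ := exists_linearIndependent' K M.row
  let e : κ ≃ ι := (Module.Basis.mk hli (hspan' ▸ hspan).ge).indexEquiv (Pi.basisFun K ι)
  exact ⟨a ∘ e.symm, linearIndependent_rows_iff_isUnit.mp (hli.comp e.symm e.symm.injective)⟩

theorem IsTotallyUnimodular.coeff_mem_range_signType {F ι : Type*} [Fintype ι]
    {B : Matrix m F K} (hB : B.IsTotallyUnimodular) {g : ι → F}
    (hg : LinearIndependent K (B.col ∘ g)) {x : F} {c : ι → K}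
    (hc : ∑ j, c j • B.col (g j) = B.col x) (j : ι) :
    c j ∈ Set.range SignType.cast := by
  classical
  obtain ⟨R, hR⟩ := exists_isUnit_submatrix_of_linearIndependent_col_s9 (M := B.submatrix id g) hg
  rw [submatrix_submatrix, Function.id_comp, Function.comp_id] at hR
  set N := B.submatrix R g
  have hNc : N *ᵥ c = fun i => B (R i) x := by
    ext i
    simpa [mulVec, dotProduct, mul_comm, N] using congrFun hc (R i)
  have hcramer : N.det * c j = (B.submatrix R (Function.update g j x)).det := by
    have : cramer N (fun i => B (R i) x) = N.det • c :=
      mulVec_injective_iff_isUnit.mpr hR (by rw [mulVec_cramer, mulVec_smul, hNc])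
    rw [← smul_eq_mul, ← Pi.smul_apply, ← this, cramer_apply]
    congr 1
    ext i k
    rcases eq_or_ne k j with rfl | hk <;> simp [N, *]
  rw [isTotallyUnimodular_iff_fintype] at hB
  obtain ⟨s, hs⟩ := hB ι R g
  obtain ⟨t, ht⟩ := hB ι R (Function.update g j x)
  have hs0 : s ≠ 0 := by
    rintro rfl
    exact ((isUnit_iff_isUnit_det N).mp hR).ne_zero (by simp [N, ← hs])
  rw [← hs, ← ht] at hcramer
  refine ⟨s * t, ?_⟩
  rcases s with _ | _ | _
  · exact absurd rfl hs0
  · simp only [SignType.neg_eq_neg_one, SignType.coe_neg, SignType.coe_one,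
      SignType.coe_mul] at hcramer ⊢
    linear_combination hcramer
  · simpa using hcramer.symm

end TotallyUnimodular

end Matrix

section Elementary

variable {m F : Type*} [Fintype m]

def IsElementary (V : Submodule ℝ (F → ℝ)) (w : F → ℝ) : Prop :=
  w ∈ V ∧ w ≠ 0 ∧ ∀ z ∈ V, z ≠ 0 → supp z ⊆ supp w → supp z = supp w

theorem signedCocircuit_iff {B : Matrix m F ℝ} {c : F → ℝ} :
    SignedCocircuit B c ↔ IsElementary B.rowSpace c ∧ Simple c := by
  simp only [SignedCocircuit, IsElementary, mem_rowSpace]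
  tauto

theorem IsElementary.col_mem_span_col_insert_zeroSet {B : Matrix m F ℝ} {w : F → ℝ}
    (hw : IsElementary B.rowSpace w) {x₀ : F} (hx₀ : w x₀ ≠ 0) (x : F) :
    B.col x ∈ Submodule.span ℝ (B.col '' insert x₀ {x | w x = 0}) := by
  by_contra hx
  obtain ⟨f, hfx, hf⟩ := Submodule.exists_dual_map_eq_bot_of_notMem hx inferInstance
  have hf₀ : ∀ x' ∈ insert x₀ {x | w x = 0}, f (B.col x') = 0 := fun x' hx' =>
    (Submodule.eq_bot_iff _).mp hf _
      (Submodule.mem_map_of_mem (Submodule.subset_span ⟨x', hx', rfl⟩))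
  set z : F → ℝ := fun x' => f (B.col x')
  have hz : z ∈ B.rowSpace := mem_rowSpace_iff_exists_dual.mpr ⟨f, fun _ => rfl⟩
  have hsupp : supp z ⊆ supp w := fun x' hzx hwx => hzx (hf₀ x' (Or.inr hwx))
  have hx₀z : x₀ ∈ supp z := hw.2.2 z hz (fun h => hfx (congrFun h x)) hsupp ▸ hx₀
  exact hx₀z (hf₀ x₀ (Set.mem_insert _ _))

theorem IsElementary.exists_signType_mul_of_isTotallyUnimodular {B : Matrix m F ℝ}
    (hB : B.IsTotallyUnimodular) {w : F → ℝ} (hw : IsElementary B.rowSpace w) {x₀ : F}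
    (hx₀ : w x₀ ≠ 0) (x : F) : ∃ s : SignType, w x = s * w x₀ := by
  classical
  obtain ⟨f, hf⟩ := mem_rowSpace_iff_exists_dual.mp hw.1
  have hcol₀ : B.col x₀ ≠ 0 := fun h => hx₀ (by rw [← hf, h, map_zero])
  obtain ⟨b, hbt, hx₀b, hspan, hli⟩ := exists_linearIndepOn_extension
    (.singleton (R := ℝ) hcol₀) (Set.singleton_subset_iff.mpr (Set.mem_insert x₀ {x | w x = 0}))
  have := hli.finite_of_isNoetherian
  have := Fintype.ofFinite b
  have hx : B.col x ∈ Submodule.span ℝ (Set.range (B.col ∘ Subtype.val : b → _)) := by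
    rw [Set.range_comp, Subtype.range_coe]
    exact Submodule.span_le.mpr hspan (hw.col_mem_span_col_insert_zeroSet hx₀ x)
  obtain ⟨c, hc⟩ := (Submodule.mem_span_range_iff_exists_fun ℝ).mp hx
  obtain ⟨s, hs⟩ := hB.coeff_mem_range_signType hli hc ⟨x₀, hx₀b rfl⟩
  refine ⟨s, ?_⟩
  calc w x = ∑ j : b, c j * w j := by simp [← hf, ← hc, map_sum]
    _ = c ⟨x₀, hx₀b rfl⟩ * w x₀ := by
      refine Finset.sum_eq_single _ (fun j _ hj => ?_) (by simp)
      have : (j : F) ≠ x₀ := fun h => hj (Subtype.ext h)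
      rw [(hbt j.2).resolve_left this, mul_zero]
    _ = s * w x₀ := by rw [hs]

end Elementary

theorem Pairwise.fin_cons {α : Type*} {r : α → α → Prop} (hr : ∀ a b, r a b → r b a) {n : ℕ}
    {a : α} {f : Fin n → α} (ha : ∀ j, r a (f j)) (hf : Pairwise fun i j => r (f i) (f j)) :
    Pairwise fun i j =>
      r ((Fin.cons a f : Fin (n + 1) → α) i) ((Fin.cons a f : Fin (n + 1) → α) j) := by
  intro i j hij
  cases i using Fin.cases <;> cases j using Fin.cases
  · exact absurd rfl hij
  · exact ha _
  · exact hr _ _ (ha _)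
  · exact hf (fun h => hij (congrArg Fin.succ h))

section Conformal

variable {F : Type*}

theorem supp_smul {a : ℝ} (ha : a ≠ 0) (v : F → ℝ) : supp (a • v) = supp v := by
  ext x
  simp [supp, ha]

def ConformsTo (z v : F → ℝ) : Prop := ∀ x, z x ≠ 0 → 0 < z x * v x

theorem conformsTo_refl (v : F → ℝ) : ConformsTo v v := fun _ hx => mul_self_pos.mpr hx

theorem ConformsTo.supp_subset {z v : F → ℝ} (h : ConformsTo z v) : supp z ⊆ supp v :=
  fun x hx hv => (h x hx).ne' (by rw [hv, mul_zero])

theorem ConformsTo.trans {u z v : F → ℝ} (h₁ : ConformsTo u z) (h₂ : ConformsTo z v) :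
    ConformsTo u v := by
  intro x hx
  have key : u x * v x * (z x * z x) = u x * z x * (z x * v x) := by ring
  exact pos_of_mul_pos_left (key ▸ mul_pos (h₁ x hx) (h₂ x (h₁.supp_subset hx)))
    (mul_self_nonneg _)

theorem ConformsTo.eq_of_simple {c v : F → ℝ} (h : ConformsTo c v) (hc : Simple c)
    (hv : Simple v) {x : F} (hx : x ∈ supp c) : c x = v x := by
  have hpos := h x hx
  rcases hc x with h₁ | h₁ | h₁ <;> rcases hv x with h₂ | h₂ | h₂ <;>
    simp only [h₁, h₂] at hpos ⊢ <;> norm_num at hpos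

theorem exists_conformsTo_sub_smul [Finite F] {z u : F → ℝ} (hu : u ≠ 0)
    (huz : supp u ⊆ supp z) :
    ∃ t : ℝ, ConformsTo (z - t • u) z ∧ ∃ x ∈ supp z, (z - t • u) x = 0 := by
  have := Fintype.ofFinite F
  obtain ⟨x₁, hux₁⟩ := Function.ne_iff.mp hu
  obtain ⟨x₀, -, hmax⟩ :=
    Finset.exists_max_image Finset.univ (fun x => |u x / z x|) ⟨x₁, Finset.mem_univ _⟩
  have hux₀ : u x₀ ≠ 0 := by
    intro h
    have := hmax x₁ (Finset.mem_univ _)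
    simp only [h, zero_div, abs_zero, abs_nonpos_iff, div_eq_zero_iff] at this
    exact this.elim hux₁ (huz hux₁)
  have hzx₀ : z x₀ ≠ 0 := huz hux₀
  refine ⟨z x₀ / u x₀, fun x hx => ?_, x₀, hzx₀, by simp [div_mul_cancel₀ _ hux₀]⟩
  have hzx : z x ≠ 0 := by
    intro h
    have : u x = 0 := by_contra fun hux => huz hux h
    simp [h, this] at hx
  -- the maximality of `|u x₀ / z x₀|` is what keeps `z - t • u` from changing sign
  have hle : u x / z x / (u x₀ / z x₀) ≤ 1 := (le_abs_self _).trans <| by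
    rw [abs_div]
    exact div_le_one_of_le₀ (hmax x (Finset.mem_univ _)) (abs_nonneg _)
  have key : (z - (z x₀ / u x₀) • u) x * z x = z x ^ 2 * (1 - u x / z x / (u x₀ / z x₀)) := by
    simp only [Pi.sub_apply, Pi.smul_apply, smul_eq_mul]
    field_simp
  exact lt_of_le_of_ne (key ▸ mul_nonneg (sq_nonneg _) (sub_nonneg.mpr hle))
    (mul_ne_zero hx hzx).symm

end Conformal

section Decomposition

variable {m F : Type*} [Fintype m]

theorem IsElementary.smul {V : Submodule ℝ (F → ℝ)} {w : F → ℝ} (hw : IsElementary V w) {a : ℝ}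
    (ha : a ≠ 0) : IsElementary V (a • w) := by
  refine ⟨V.smul_mem a hw.1, smul_ne_zero ha hw.2.1, fun z hz hz0 hzw => ?_⟩
  rw [supp_smul ha] at hzw ⊢
  exact hw.2.2 z hz hz0 hzw

theorem exists_isElementary_conformsTo [Finite F] {V : Submodule ℝ (F → ℝ)} {v : F → ℝ}
    (hv : v ∈ V) (hv0 : v ≠ 0) : ∃ w, IsElementary V w ∧ ConformsTo w v := by
  obtain ⟨w, ⟨hwV, hw0, hwv⟩, hmin⟩ := (measure fun z : F → ℝ => (supp z).ncard).wf.has_min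
    {z | z ∈ V ∧ z ≠ 0 ∧ ConformsTo z v} ⟨v, hv, hv0, conformsTo_refl v⟩
  refine ⟨w, ⟨hwV, hw0, fun u huV hu0 huw => ?_⟩, hwv⟩
  by_contra hne
  obtain ⟨t, hconf, x, hwx, hx⟩ := exists_conformsTo_sub_smul hu0 huw
  obtain ⟨y, hyw, hyu⟩ := Set.exists_of_ssubset (huw.ssubset_of_ne hne)
  refine hmin (w - t • u)
    ⟨V.sub_mem hwV (V.smul_mem t huV), fun h => hyw ?_, hconf.trans hwv⟩ ?_
  · simpa [not_not.mp hyu] using congrFun h y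
  · exact Set.ncard_lt_ncard ⟨hconf.supp_subset, fun h => h hwx hx⟩ (Set.toFinite _)

theorem exists_signedCocircuit_conformsTo [Finite F] {B : Matrix m F ℝ}
    (hB : B.IsTotallyUnimodular) {v : F → ℝ} (hv : v ∈ B.rowSpace) (hv0 : v ≠ 0) :
    ∃ c, SignedCocircuit B c ∧ ConformsTo c v := by
  obtain ⟨w, hw, hwv⟩ := exists_isElementary_conformsTo hv hv0
  obtain ⟨x₀, hx₀⟩ : ∃ x, w x ≠ 0 := Function.ne_iff.mp hw.2.1
  have ha : 0 < |w x₀|⁻¹ := by positivity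
  refine ⟨|w x₀|⁻¹ • w, signedCocircuit_iff.mpr ⟨hw.smul ha.ne', fun x => ?_⟩, fun x hx => ?_⟩
  · obtain ⟨s, hs⟩ := hw.exists_signType_mul_of_isTotallyUnimodular hB hx₀ x
    simp only [Pi.smul_apply, smul_eq_mul, hs]
    rcases abs_choice (w x₀) with h | h <;> rw [h] <;> rcases s with _ | _ | _ <;>
      field_simp <;> norm_num
  · rw [Pi.smul_apply, smul_eq_mul, mul_assoc]
    exact mul_pos ha (hwv x (right_ne_zero_of_mul hx))

theorem exists_signedCocircuit_decomposition [Finite F] {B : Matrix m F ℝ}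
    (hB : B.IsTotallyUnimodular) {v : F → ℝ} (hv : v ∈ B.rowSpace) (hvs : Simple v) :
    ∃ (n : ℕ) (c : Fin n → (F → ℝ)),
      (∀ i, SignedCocircuit B (c i)) ∧
      (Pairwise fun i j => supp (c i) ∩ supp (c j) = ∅) ∧
      (∀ i, ∀ x ∈ supp (c i), c i x = v x) ∧
      v = ∑ i, c i := by
  induction hk : (supp v).ncard using Nat.strong_induction_on generalizing v with
  | _ k ih =>
  by_cases hv0 : v = 0
  · exact ⟨0, Fin.elim0, fun i => i.elim0, fun i => i.elim0, fun i => i.elim0, by simp [hv0]⟩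
  obtain ⟨c, hc, hcv⟩ := exists_signedCocircuit_conformsTo hB hv hv0
  have hcv' : ∀ x ∈ supp c, c x = v x := fun x hx => hcv.eq_of_simple hc.2.2.1 hvs hx
  have hon : ∀ x ∈ supp c, (v - c) x = 0 := fun x hx => sub_eq_zero.mpr (hcv' x hx).symm
  have hoff : ∀ x ∉ supp c, (v - c) x = v x := fun x hx => by simp [not_not.mp hx]
  have hsupp : supp (v - c) = supp v \ supp c := by
    ext x
    by_cases hx : x ∈ supp c
    · simp only [Set.mem_sdiff, hx, not_true_eq_false, and_false, iff_false]
      exact not_not.mpr (hon x hx)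
    · simp only [Set.mem_sdiff, hx, not_false_eq_true, and_true]
      exact not_congr (hoff x hx ▸ Iff.rfl)
  have hlt : (supp (v - c)).ncard < k := by
    obtain ⟨x, hx⟩ : ∃ x, c x ≠ 0 := Function.ne_iff.mp hc.2.1
    rw [← hk, hsupp]
    exact Set.ncard_lt_ncard (Set.sdiff_ssubset_left_iff.mpr ⟨x, hcv.supp_subset hx, hx⟩)
      (Set.toFinite _)
  have hvc : v - c ∈ B.rowSpace := B.rowSpace.sub_mem hv (signedCocircuit_iff.mp hc).1.1
  have hvcs : Simple (v - c) := fun x => by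
    by_cases hx : x ∈ supp c
    · exact Or.inr (Or.inl (hon x hx))
    · rw [hoff x hx]
      exact hvs x
  obtain ⟨n, c', hc', hdisj, hagree, hsum⟩ := ih _ hlt hvc hvcs rfl
  have hc'supp : ∀ i, supp (c' i) ⊆ supp v \ supp c := fun i x hx =>
    hsupp ▸ (show (v - c) x ≠ 0 from hagree i x hx ▸ hx)
  refine ⟨n + 1, Fin.cons c c', fun i => ?_, ?_, fun i => ?_, ?_⟩
  · cases i using Fin.cases
    · simpa using hc
    · simpa using hc' _
  · refine Pairwise.fin_cons (r := fun a b => supp a ∩ supp b = ∅)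
      (fun _ _ h => by rwa [Set.inter_comm]) (fun j => ?_) hdisj
    exact Set.eq_empty_of_forall_notMem fun x hx => (hc'supp j hx.2).2 hx.1
  · cases i using Fin.cases
    · simpa using hcv'
    · intro x hx
      simp only [Fin.cons_succ] at hx ⊢
      rw [hagree _ x hx, hoff x (hc'supp _ hx).2]
  · rw [Fin.sum_cons, ← hsum, add_sub_cancel]

end Decomposition

theorem cocircuit_restriction_decomposes_in_deletion_general
    {m E : Type*} [Fintype m] [Fintype E] (A : Matrix m E ℝ)
    (hA : A.IsTotallyUnimodular) (D : E → ℝ) (hD : SignedCocircuit A D)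
    (e : E) :
    ∃ (n : ℕ) (c : Fin n → ({x : E // x ≠ e} → ℝ)),
      (∀ i, SignedCocircuit (A.submatrix id (Subtype.val : {x : E // x ≠ e} → E)) (c i)) ∧
      (Pairwise fun i j => supp (c i) ∩ supp (c j) = ∅) ∧
      (∀ i, ∀ x ∈ supp (c i), c i x = D x.1) ∧
      (fun x : {x : E // x ≠ e} => D x.1) = ∑ i, c i := by
  obtain ⟨⟨y, hy⟩, -, hDs, -⟩ := hD
  refine exists_signedCocircuit_decomposition (hA.submatrix id Subtype.val) ⟨y, ?_⟩ fun x => hDs x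
  rw [← hy]
  rfl

theorem cocircuit_restriction_decomposes_in_deletion
    {m E : Type*} [Fintype m] [Fintype E] [DecidableEq E] (A : Matrix m E ℝ)
    (hA : A.IsTotallyUnimodular) (D : E → ℝ) (hD : SignedCocircuit A D)
    (e : E) (hloop : (fun i => A i e) ≠ 0)
    (hne : (fun x : {x : E // x ≠ e} => D x.1) ≠ 0) :
    ∃ (n : ℕ) (c : Fin n → ({x : E // x ≠ e} → ℝ)),
      (∀ i, SignedCocircuit (A.submatrix id (Subtype.val : {x : E // x ≠ e} → E)) (c i)) ∧
      (Pairwise fun i j => supp (c i) ∩ supp (c j) = ∅) ∧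
      (∀ i, ∀ x ∈ supp (c i), c i x = D x.1) ∧
      (fun x : {x : E // x ≠ e} => D x.1) = ∑ i, c i :=
  cocircuit_restriction_decomposes_in_deletion_general A hA D hD e
end

section
/- Let M be a regular matroid with circuit-cocircuit signature (σ, σ*), let B be a basis, and let e ∉ B be a non-coloop element. Then for all x ∈ E∖{e}, the BBY orientation in the deletion agrees with the BBY orientation in M: BBY_{(M∖e, σ∖e, σ*∖e)}(B)(x) = BBY_{(M,σ,σ*)}(B)(x). Dually, if e ∈ B is a non-loop element, then for all x ∈ E∖{e}, BBY_{(M/e, σ/e, σ*/e)}(B∖e)(x) = BBY_{(M,σ,σ*)}(B)(x). -/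
open Matrix

open scoped Classical

section Aux

variable {m E : Type*}

lemma Fb_pos {α : Type*} {σ : Set (α → ℝ)} {B : Set α} {x : α} (h : x ∈ B) :
    Fb σ B x = ({-1, 1} : Set ℝ) := if_pos h

lemma Fb_neg {α : Type*} {σ : Set (α → ℝ)} {B : Set α} {x : α} (h : x ∉ B) :
    Fb σ B x = {c | ∃ C ∈ σ, x ∈ supp C ∧ supp C ⊆ B ∪ {x} ∧ c = C x} := if_neg h

lemma supp_eq_of_smul_rel {α : Type*} {C C' : α → ℝ} {x : α} (hC : C x ≠ 0) (hC' : C' x ≠ 0)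
    (h : C' x • C = C x • C') : supp C = supp C' := by
  ext y
  have hxy : C' x * C y = C x * C' y := by
    simpa using congrFun h y
  simp only [supp, Set.mem_setOf_eq]
  constructor
  · intro hy h0
    rw [h0, mul_zero] at hxy
    exact mul_ne_zero hC' hy hxy
  · intro hy h0
    rw [h0, mul_zero] at hxy
    exact mul_ne_zero hC hy hxy.symm

/-- A row-space vector vanishing on a basis is zero. -/
lemma row_zero_of_vanish [Fintype m] (A : Matrix m E ℝ) {B : Set E}
    (hB : IsBasisSet A B) {w : E → ℝ} (hw : ∃ y, Matrix.vecMul y A = w)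
    (hwB : ∀ b ∈ B, w b = 0) : w = 0 := by
  obtain ⟨y, rfl⟩ := hw
  let φ : (m → ℝ) →ₗ[ℝ] ℝ :=
    { toFun := fun v => y ⬝ᵥ v
      map_add' := fun a b => dotProduct_add y a b
      map_smul' := fun c a => by simp [dotProduct_smul] }
  have hφ : ∀ z : E, φ (fun i => A i z) = Matrix.vecMul y A z := fun z => rfl
  have hspan : Submodule.span ℝ (Set.range fun x : B => fun i => A i x.1) ≤ LinearMap.ker φ := by
    rw [Submodule.span_le]
    rintro _ ⟨b, rfl⟩
    simp only [SetLike.mem_coe, LinearMap.mem_ker]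
    rw [hφ b.1]
    exact hwB b.1 b.2
  funext z
  have hz := hspan (hB.2 z)
  rw [LinearMap.mem_ker, hφ z] at hz
  simpa using hz

/-- A kernel vector supported inside a basis is zero. -/
lemma ker_zero_of_supp [Fintype E] (A : Matrix m E ℝ) {B : Set E}
    (hB : LinearIndependent ℝ (fun x : B => fun i => A i x.1))
    {C : E → ℝ} (hker : A.mulVec C = 0) (hsupp : supp C ⊆ B) : C = 0 := by
  classical
  haveI : Fintype B := (Set.toFinite B).fintype
  have hsum : ∑ x : B, C x.1 • (fun i => A i x.1) = (0 : m → ℝ) := by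
    funext i
    have h1 : (∑ x : B, C x.1 • (fun i => A i x.1)) i = ∑ x : B, C x.1 * A i x.1 := by
      simp [Finset.sum_apply]
    rw [h1]
    have h2 : ∑ x ∈ Finset.univ.filter (fun z : E => z ∈ B), C x * A i x
        = ∑ x : B, C x.1 * A i x.1 := by
      exact Finset.sum_subtype _ (by simp) (fun x => C x * A i x)
    have h3 : ∑ x ∈ Finset.univ.filter (fun z : E => z ∈ B), C x * A i x
        = ∑ x : E, C x * A i x := by
      apply Finset.sum_filter_of_ne
      intro x _ hx
      by_contra hxB
      have : C x = 0 := by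
        by_contra h0
        exact hxB (hsupp h0)
      simp [this] at hx
    have h4 : ∑ x : E, C x * A i x = A.mulVec C i := by
      simp [Matrix.mulVec, dotProduct, mul_comm]
    rw [← h2, h3, h4, hker]
  have hz := Fintype.linearIndependent_iff.mp hB (fun x : B => C x.1) hsum
  funext z
  by_cases hzB : z ∈ B
  · exact hz ⟨z, hzB⟩
  · by_contra h0
    exact hzB (hsupp h0)

variable [Fintype E] {σ σs : Set (E → ℝ)} {B : Set E} {e : E}

lemma Fb_del_circ (A : Matrix m E ℝ) (hσ : σ ⊆ {C | SignedCircuit A C})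
    (heB : e ∉ B) (x : {x : E // x ≠ e}) :
    Fb (minorSig e σ (SCDel A e)) {y : {x : E // x ≠ e} | y.1 ∈ B} x = Fb σ B x.1 := by
  by_cases hxB : x.1 ∈ B
  · rw [Fb_pos (show x ∈ {y : {x : E // x ≠ e} | y.1 ∈ B} from hxB), Fb_pos hxB]
  · rw [Fb_neg (show x ∉ {y : {x : E // x ≠ e} | y.1 ∈ B} from hxB), Fb_neg hxB]
    ext c
    simp only [Set.mem_setOf_eq]
    constructor
    · rintro ⟨D, hDm, hxD, hDsub, rfl⟩
      obtain ⟨⟨C₀, hC₀σ, rfl⟩, C₁, hC₁c, hC₁e, hres₁⟩ := hDm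
      have hC₀c : SignedCircuit A C₀ := hσ hC₀σ
      have hval : ∀ y : {z : E // z ≠ e}, C₁ y.1 = C₀ y.1 := fun y => congrFun hres₁ y
      have hxC₀ : C₀ x.1 ≠ 0 := hxD
      have hC₁ne : C₁ ≠ 0 := by
        intro h0
        apply hxC₀
        rw [← hval x, h0]
        rfl
      have hsub1 : supp C₁ ⊆ supp C₀ := by
        intro y hy
        by_cases hye : y = e
        · subst hye; exact absurd hC₁e hy
        · exact fun h0 => hy ((hval ⟨y, hye⟩).trans h0)
      have hsupp_eq : supp C₁ = supp C₀ := hC₀c.2.2.2 C₁ hC₁c.1 hC₁ne hsub1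
      have hC₀e : C₀ e = 0 := by
        by_contra h0
        have : e ∈ supp C₁ := hsupp_eq ▸ (h0 : e ∈ supp C₀)
        exact this hC₁e
      refine ⟨C₀, hC₀σ, hxC₀, ?_, rfl⟩
      intro y hy
      have hye : y ≠ e := by
        rintro rfl
        exact hy hC₀e
      have hm : (⟨y, hye⟩ : {z : E // z ≠ e}) ∈ supp (restr e C₀) := hy
      rcases hDsub hm with h | h
      · exact Or.inl h
      · exact Or.inr (congrArg Subtype.val h)
    · rintro ⟨C, hCσ, hxC, hCsub, rfl⟩
      have hCe : C e = 0 := by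
        by_contra h0
        rcases hCsub h0 with h | h
        · exact heB h
        · exact x.2 (Set.mem_singleton_iff.mp h).symm
      refine ⟨restr e C, ⟨⟨C, hCσ, rfl⟩, ⟨C, hσ hCσ, hCe, rfl⟩⟩, hxC, ?_, rfl⟩
      intro y hy
      rcases hCsub hy with h | h
      · exact Or.inl h
      · exact Or.inr (Subtype.ext h)

lemma Fb_del_cocirc [Fintype m] (A : Matrix m E ℝ) (hσs : σs ⊆ {C | SignedCocircuit A C})
    (hB : IsBasisSet A B) (heB : e ∉ B) (x : {x : E // x ≠ e}) :
    Fb (minorSig e σs (SCstarDel A e)) {y : {x : E // x ≠ e} | y.1 ∈ B}ᶜ x = Fb σs Bᶜ x.1 := by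
  by_cases hxB : x.1 ∈ B
  · rw [Fb_neg (show x ∉ {y : {x : E // x ≠ e} | y.1 ∈ B}ᶜ from fun h => h hxB),
      Fb_neg (show x.1 ∉ Bᶜ from fun h => h hxB)]
    ext c
    simp only [Set.mem_setOf_eq]
    constructor
    · rintro ⟨D, hDm, hxD, hDsub, rfl⟩
      obtain ⟨⟨C₀, hC₀σ, rfl⟩, -⟩ := hDm
      refine ⟨C₀, hC₀σ, hxD, ?_, rfl⟩
      intro y hy
      by_cases hye : y = e
      · subst hye; exact Or.inl heB
      · have hm : (⟨y, hye⟩ : {z : E // z ≠ e}) ∈ supp (restr e C₀) := hy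
        rcases hDsub hm with h | h
        · exact Or.inl h
        · exact Or.inr (congrArg Subtype.val h)
    · rintro ⟨C, hCσ, hxC, hCsub, rfl⟩
      have hCco : SignedCocircuit A C := hσs hCσ
      have hxCne : C x.1 ≠ 0 := hxC
      have hmin : ∀ D' : {z : E // z ≠ e} → ℝ,
          (∃ C', SignedCocircuit A C' ∧ restr e C' = D') →
          D' ≠ 0 → supp D' ⊆ supp (restr e C) → supp D' = supp (restr e C) := by
        rintro D' ⟨C', hC'co, rfl⟩ hD'ne hD'sub
        have hC'sub : supp C' ⊆ Bᶜ ∪ {x.1} := by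
          intro y hy
          by_cases hye : y = e
          · subst hye; exact Or.inl heB
          · exact hCsub (hD'sub (show (⟨y, hye⟩ : {z : E // z ≠ e}) ∈ supp (restr e C') from hy))
        have hxC' : C' x.1 ≠ 0 := by
          by_contra h0
          apply hC'co.2.1
          apply row_zero_of_vanish A hB hC'co.1
          intro b hb
          by_contra hb0
          rcases hC'sub hb0 with h | h
          · exact h hb
          · have hbx : b = x.1 := h
            rw [hbx] at hb0
            exact hb0 h0
        obtain ⟨y₀, hy₀⟩ := hCco.1
        obtain ⟨y₁, hy₁⟩ := hC'co.1
        have hw : Matrix.vecMul (C' x.1 • y₀ - C x.1 • y₁) A = C' x.1 • C - C x.1 • C' := by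
          rw [Matrix.sub_vecMul, Matrix.smul_vecMul, Matrix.smul_vecMul, hy₀, hy₁]
        have hwzero : C' x.1 • C - C x.1 • C' = 0 := by
          apply row_zero_of_vanish A hB ⟨_, hw⟩
          intro b hb
          by_cases hbx : b = x.1
          · subst hbx
            simp [mul_comm]
          · have hCb : C b = 0 := by
              by_contra h0
              rcases hCsub h0 with h | h
              · exact h hb
              · exact hbx h
            have hC'b : C' b = 0 := by
              by_contra h0
              rcases hC'sub h0 with h | h
              · exact h hb
              · exact hbx h
            simp [hCb, hC'b]
        have hkey : C' x.1 • C = C x.1 • C' := sub_eq_zero.mp hwzero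
        have hsupp : supp C = supp C' := supp_eq_of_smul_rel hxCne hxC' hkey
        ext z
        show C' z.1 ≠ 0 ↔ C z.1 ≠ 0
        constructor
        · intro h
          have : z.1 ∈ supp C' := h
          rwa [← hsupp] at this
        · intro h
          have : z.1 ∈ supp C := h
          rwa [hsupp] at this
      have hDne : restr e C ≠ 0 := by
        intro h0
        exact hxCne (congrFun h0 x)
      refine ⟨restr e C, ⟨⟨C, hCσ, rfl⟩, ⟨C, hCco, rfl⟩, hDne, hmin⟩, hxC, ?_, rfl⟩
      intro y hy
      rcases hCsub (show y.1 ∈ supp C from hy) with h | h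
      · exact Or.inl h
      · exact Or.inr (Subtype.ext h)
  · rw [Fb_pos (show x ∈ {y : {x : E // x ≠ e} | y.1 ∈ B}ᶜ from hxB),
      Fb_pos (show x.1 ∈ Bᶜ from hxB)]

lemma Fb_contr_circ (A : Matrix m E ℝ) (hσ : σ ⊆ {C | SignedCircuit A C})
    (hB : IsBasisSet A B) (heB : e ∈ B) (x : {x : E // x ≠ e}) :
    Fb (minorSig e σ (SCContr A e)) {y : {x : E // x ≠ e} | y.1 ∈ B} x = Fb σ B x.1 := by
  by_cases hxB : x.1 ∈ B
  · rw [Fb_pos (show x ∈ {y : {x : E // x ≠ e} | y.1 ∈ B} from hxB), Fb_pos hxB]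
  · rw [Fb_neg (show x ∉ {y : {x : E // x ≠ e} | y.1 ∈ B} from hxB), Fb_neg hxB]
    ext c
    simp only [Set.mem_setOf_eq]
    constructor
    · rintro ⟨D, hDm, hxD, hDsub, rfl⟩
      obtain ⟨⟨C₀, hC₀σ, rfl⟩, -⟩ := hDm
      refine ⟨C₀, hC₀σ, hxD, ?_, rfl⟩
      intro y hy
      by_cases hye : y = e
      · subst hye; exact Or.inl heB
      · have hm : (⟨y, hye⟩ : {z : E // z ≠ e}) ∈ supp (restr e C₀) := hy
        rcases hDsub hm with h | h
        · exact Or.inl h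
        · exact Or.inr (congrArg Subtype.val h)
    · rintro ⟨C, hCσ, hxC, hCsub, rfl⟩
      have hCc : SignedCircuit A C := hσ hCσ
      have hxCne : C x.1 ≠ 0 := hxC
      have hmin : ∀ D' : {z : E // z ≠ e} → ℝ,
          (∃ C', SignedCircuit A C' ∧ restr e C' = D') →
          D' ≠ 0 → supp D' ⊆ supp (restr e C) → supp D' = supp (restr e C) := by
        rintro D' ⟨C', hC'c, rfl⟩ hD'ne hD'sub
        have hC'sub : supp C' ⊆ B ∪ {x.1} := by
          intro y hy
          by_cases hye : y = e
          · subst hye; exact Or.inl heB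
          · exact hCsub (hD'sub (show (⟨y, hye⟩ : {z : E // z ≠ e}) ∈ supp (restr e C') from hy))
        have hxC' : C' x.1 ≠ 0 := by
          by_contra h0
          apply hC'c.2.1
          apply ker_zero_of_supp A hB.1 hC'c.1
          intro b hb
          rcases hC'sub hb with h | h
          · exact h
          · have hbx : b = x.1 := h
            rw [hbx] at hb
            exact absurd h0 hb
        have hw : A.mulVec (C' x.1 • C - C x.1 • C') = 0 := by
          rw [Matrix.mulVec_sub, Matrix.mulVec_smul, Matrix.mulVec_smul, hCc.1, hC'c.1]
          simp
        have hwzero : C' x.1 • C - C x.1 • C' = 0 := by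
          apply ker_zero_of_supp A hB.1 hw
          intro b hb
          have hbx : b ≠ x.1 := by
            rintro rfl
            apply hb
            show C' x.1 * C x.1 - C x.1 * C' x.1 = 0
            ring
          have hCC' : C b ≠ 0 ∨ C' b ≠ 0 := by
            by_contra h
            push_neg at h
            apply hb
            show C' x.1 * C b - C x.1 * C' b = 0
            rw [h.1, h.2, mul_zero, mul_zero, sub_zero]
          rcases hCC' with h | h
          · rcases hCsub h with h' | h'
            · exact h'
            · exact absurd h' hbx
          · rcases hC'sub h with h' | h'
            · exact h'
            · exact absurd h' hbx
        have hkey : C' x.1 • C = C x.1 • C' := sub_eq_zero.mp hwzero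
        have hsupp : supp C = supp C' := supp_eq_of_smul_rel hxCne hxC' hkey
        ext z
        show C' z.1 ≠ 0 ↔ C z.1 ≠ 0
        constructor
        · intro h
          have : z.1 ∈ supp C' := h
          rwa [← hsupp] at this
        · intro h
          have : z.1 ∈ supp C := h
          rwa [hsupp] at this
      have hDne : restr e C ≠ 0 := by
        intro h0
        exact hxCne (congrFun h0 x)
      refine ⟨restr e C, ⟨⟨C, hCσ, rfl⟩, ⟨C, hCc, rfl⟩, hDne, hmin⟩, hxC, ?_, rfl⟩
      intro y hy
      rcases hCsub (show y.1 ∈ supp C from hy) with h | h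
      · exact Or.inl h
      · exact Or.inr (Subtype.ext h)

lemma Fb_contr_cocirc [Fintype m] (A : Matrix m E ℝ) (hσs : σs ⊆ {C | SignedCocircuit A C})
    (heB : e ∈ B) (x : {x : E // x ≠ e}) :
    Fb (minorSig e σs (SCstarContr A e)) {y : {x : E // x ≠ e} | y.1 ∈ B}ᶜ x = Fb σs Bᶜ x.1 := by
  by_cases hxB : x.1 ∈ B
  · rw [Fb_neg (show x ∉ {y : {x : E // x ≠ e} | y.1 ∈ B}ᶜ from fun h => h hxB),
      Fb_neg (show x.1 ∉ Bᶜ from fun h => h hxB)]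
    ext c
    simp only [Set.mem_setOf_eq]
    constructor
    · rintro ⟨D, hDm, hxD, hDsub, rfl⟩
      obtain ⟨⟨C₀, hC₀σ, rfl⟩, C₁, hC₁co, hC₁e, hres₁⟩ := hDm
      have hC₀co : SignedCocircuit A C₀ := hσs hC₀σ
      have hval : ∀ y : {z : E // z ≠ e}, C₁ y.1 = C₀ y.1 := fun y => congrFun hres₁ y
      have hxC₀ : C₀ x.1 ≠ 0 := hxD
      have hC₁ne : C₁ ≠ 0 := by
        intro h0
        apply hxC₀
        rw [← hval x, h0]
        rfl
      have hsub1 : supp C₁ ⊆ supp C₀ := by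
        intro y hy
        by_cases hye : y = e
        · subst hye; exact absurd hC₁e hy
        · exact fun h0 => hy ((hval ⟨y, hye⟩).trans h0)
      have hsupp_eq : supp C₁ = supp C₀ := hC₀co.2.2.2 C₁ hC₁co.1 hC₁ne hsub1
      have hC₀e : C₀ e = 0 := by
        by_contra h0
        have : e ∈ supp C₁ := hsupp_eq ▸ (h0 : e ∈ supp C₀)
        exact this hC₁e
      refine ⟨C₀, hC₀σ, hxC₀, ?_, rfl⟩
      intro y hy
      have hye : y ≠ e := by
        rintro rfl
        exact hy hC₀e
      have hm : (⟨y, hye⟩ : {z : E // z ≠ e}) ∈ supp (restr e C₀) := hy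
      rcases hDsub hm with h | h
      · exact Or.inl h
      · exact Or.inr (congrArg Subtype.val h)
    · rintro ⟨C, hCσ, hxC, hCsub, rfl⟩
      have hCe : C e = 0 := by
        by_contra h0
        rcases hCsub h0 with h | h
        · exact h heB
        · exact x.2 (Set.mem_singleton_iff.mp h).symm
      refine ⟨restr e C, ⟨⟨C, hCσ, rfl⟩, ⟨C, hσs hCσ, hCe, rfl⟩⟩, hxC, ?_, rfl⟩
      intro y hy
      rcases hCsub hy with h | h
      · exact Or.inl h
      · exact Or.inr (Subtype.ext h)
  · rw [Fb_pos (show x ∈ {y : {x : E // x ≠ e} | y.1 ∈ B}ᶜ from hxB),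
      Fb_pos (show x.1 ∈ Bᶜ from hxB)]

end Aux

theorem BBY_orientation_deletion_contraction
    {m E : Type*} [Fintype m] [Fintype E] [DecidableEq E] (A : Matrix m E ℝ)
    (hA : A.IsTotallyUnimodular) (σ σs : Set (E → ℝ))
    (hσ : SigOf {C | SignedCircuit A C} σ)
    (hσs : SigOf {C | SignedCocircuit A C} σs)
    (B : Set E) (hB : IsBasisSet A B) (e : E) :
    (e ∉ B →
      (¬ ∃ w : E → ℝ, (∃ y, Matrix.vecMul y A = w) ∧ w ≠ 0 ∧ supp w = {e}) →
      ∀ x : {x : E // x ≠ e},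
        Fb (minorSig e σ (SCDel A e)) {y : {x : E // x ≠ e} | y.1 ∈ B} x ∩
          Fb (minorSig e σs (SCstarDel A e)) {y : {x : E // x ≠ e} | y.1 ∈ B}ᶜ x =
        Fb σ B x.1 ∩ Fb σs Bᶜ x.1) ∧
    (e ∈ B → (fun i => A i e) ≠ 0 →
      ∀ x : {x : E // x ≠ e},
        Fb (minorSig e σ (SCContr A e)) {y : {x : E // x ≠ e} | y.1 ∈ B} x ∩
          Fb (minorSig e σs (SCstarContr A e)) {y : {x : E // x ≠ e} | y.1 ∈ B}ᶜ x =
        Fb σ B x.1 ∩ Fb σs Bᶜ x.1) := by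
  constructor
  · intro heB _ x
    rw [Fb_del_circ A hσ.1 heB x, Fb_del_cocirc A hσs.1 hB heB x]
  · intro heB _ x
    rw [Fb_contr_circ A hσ.1 hB heB x, Fb_contr_cocirc A hσs.1 heB x]
end

section
/- Let M be a regular matroid with triangulating circuit signature σ and triangulating cocircuit signature σ*, and let e be an element of the ground set (not a coloop for deletion, not a loop for contraction). Then σ∖e and σ/e are triangulating circuit signatures of M∖e and M/e respectively, and σ*∖e and σ*/e are triangulating cocircuit signatures. -/
open Matrix

open scoped Classical

section Aux

variable {E : Type*}

lemma restr_eq (e : E) {C : E → ℝ} {D : {x : E // x ≠ e} → ℝ} (h : restr e C = D)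
    (x : {x : E // x ≠ e}) : C x.1 = D x := congrFun h x

/-- If a (co)circuit-like minimal vector `C` has the same restriction away from `e`
as another member `C''` of the same family with `C'' e = 0`, then `C e = 0`. -/
lemma ce_zero (e : E) (K : (E → ℝ) → Prop) (C C'' : E → ℝ)
    (hK : K C'') (h2 : C'' ≠ 0) (hCe : C'' e = 0)
    (hres : restr e C'' = restr e C)
    (hmin : ∀ D, K D → D ≠ 0 → supp D ⊆ supp C → supp D = supp C) :
    C e = 0 := by
  have hsub : supp C'' ⊆ supp C := by
    intro y hy
    have hye : y ≠ e := by
      intro h; subst h; exact hy hCe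
    have : C'' y = C y := congrFun hres ⟨y, hye⟩
    show C y ≠ 0
    rw [← this]; exact hy
  have heq : supp C'' = supp C := hmin C'' hK h2 hsub
  by_contra hne
  have : e ∈ supp C := hne
  rw [← heq] at this
  exact this hCe

/-- Inclusion of fourientations of a minor basis into those of the original basis. -/
lemma Fb_incl (e : E) (σ : Set (E → ℝ)) (σ' : Set ({x : E // x ≠ e} → ℝ))
    (B : Set E)
    (h : ∀ D ∈ σ', ∃ C ∈ σ, restr e C = D ∧ (e ∈ B ∨ C e = 0))
    (x : {x : E // x ≠ e}) :
    Fb σ' {y : {x : E // x ≠ e} | y.1 ∈ B} x ⊆ Fb σ B x.1 := by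
  unfold Fb
  by_cases hx : x.1 ∈ B
  · rw [if_pos hx, if_pos (show x ∈ {y : {x : E // x ≠ e} | y.1 ∈ B} from hx)]
  · rw [if_neg hx, if_neg (show x ∉ {y : {x : E // x ≠ e} | y.1 ∈ B} from hx)]
    rintro c ⟨D, hD, hxD, hsupp, rfl⟩
    obtain ⟨C, hC, hres, hCe⟩ := h D hD
    refine ⟨C, hC, ?_, ?_, ?_⟩
    · show C x.1 ≠ 0
      rw [restr_eq e hres x]; exact hxD
    · intro y hy
      by_cases hye : y = e
      · subst hye
        rcases hCe with h1 | h2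
        · exact Or.inl h1
        · exact absurd h2 hy
      · have hDy : D ⟨y, hye⟩ ≠ 0 := by
          rw [← restr_eq e hres ⟨y, hye⟩]; exact hy
        rcases hsupp hDy with h1 | h2
        · exact Or.inl h1
        · right
          have := congrArg Subtype.val h2
          exact this
    · exact (restr_eq e hres x).symm

/-- Core lifting lemma: incompatibility in the original matroid transfers to the minor. -/
lemma key_notCompat (e : E) (SC σ : Set (E → ℝ))
    (σ' : Set ({x : E // x ≠ e} → ℝ)) (B₁ B₂ : Set E)
    (hσ'1 : ∀ D ∈ σ', ∃ C ∈ σ, restr e C = D ∧ (e ∈ B₁ ∨ C e = 0))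
    (hσ'2 : ∀ D ∈ σ', ∃ C ∈ σ, restr e C = D ∧ (e ∈ B₂ ∨ C e = 0))
    (D : {x : E // x ≠ e} → ℝ)
    (C : E → ℝ) (hC : C ∈ SC) (hres : restr e C = D)
    (hCe : C e = 0 ∨ (e ∈ B₁ ∧ e ∈ B₂ ∧ (C e = -1 ∨ C e = 1)))
    (hnc : ∀ C ∈ SC, ¬ CompatF C (fun x => Fb σ B₁ x ∩ negF (Fb σ B₂) x)) :
    ¬ CompatF D (fun x => Fb σ' {y : {x : E // x ≠ e} | y.1 ∈ B₁} x ∩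
        negF (Fb σ' {y : {x : E // x ≠ e} | y.1 ∈ B₂}) x) := by
  intro hcompat
  refine hnc C hC ?_
  intro x hx
  by_cases hxe : x = e
  · subst hxe
    rcases hCe with h0 | ⟨h1, h2, hpm⟩
    · exact absurd h0 hx
    · constructor
      · rw [Fb, if_pos h1]
        rcases hpm with h | h <;> simp [h]
      · refine ⟨-C x, ?_, by ring⟩
        rw [Fb, if_pos h2]
        rcases hpm with h | h <;> simp [h]
  · have hDx : D ⟨x, hxe⟩ ≠ 0 := by
      rw [← restr_eq e hres ⟨x, hxe⟩]; exact hx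
    obtain ⟨m1, m2⟩ := hcompat ⟨x, hxe⟩ hDx
    have e1 := Fb_incl e σ σ' B₁ hσ'1 ⟨x, hxe⟩ m1
    have e2 : D ⟨x, hxe⟩ ∈ negF (Fb σ B₂) x := by
      obtain ⟨s, hs, hsEq⟩ := m2
      exact ⟨s, Fb_incl e σ σ' B₂ hσ'2 ⟨x, hxe⟩ hs, hsEq⟩
    have hCD : C x = D ⟨x, hxe⟩ := restr_eq e hres ⟨x, hxe⟩
    rw [hCD]; exact ⟨e1, e2⟩

lemma base_inj (e : E) (B₁ B₂ : Set E) (he : e ∈ B₁ ↔ e ∈ B₂)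
    (h : {y : {x : E // x ≠ e} | y.1 ∈ B₁} = {y : {x : E // x ≠ e} | y.1 ∈ B₂}) :
    B₁ = B₂ := by
  ext z
  by_cases hz : z = e
  · subst hz; exact he
  · exact Set.ext_iff.mp h ⟨z, hz⟩

lemma compl_subtype (e : E) (B : Set E) :
    ({y : {x : E // x ≠ e} | y.1 ∈ B})ᶜ = {y : {x : E // x ≠ e} | y.1 ∈ Bᶜ} := rfl

end Aux
theorem triangulating_signatures_minor_closed
    {m E : Type*} [Fintype m] [Fintype E] [DecidableEq E] (A : Matrix m E ℝ)
    (hA : A.IsTotallyUnimodular) (e : E)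
    (hloop : (fun i => A i e) ≠ 0)
    (hcoloop : ¬ ∃ w : E → ℝ, (∃ y, Matrix.vecMul y A = w) ∧ w ≠ 0 ∧ supp w = {e})
    (σ σs : Set (E → ℝ))
    (hσ : SigOf {C | SignedCircuit A C} σ)
    (hσs : SigOf {C | SignedCocircuit A C} σs)
    (htri : Triang {C | SignedCircuit A C} {B | IsBasisSet A B} σ)
    (htris : TriangCo {C | SignedCocircuit A C} {B | IsBasisSet A B} σs) :
    Triang (SCDel A e)
        {B' | ∃ B : Set E, IsBasisSet A B ∧ e ∉ B ∧
          B' = {y : {x : E // x ≠ e} | y.1 ∈ B}}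
        (minorSig e σ (SCDel A e)) ∧
    Triang (SCContr A e)
        {B' | ∃ B : Set E, IsBasisSet A B ∧ e ∈ B ∧
          B' = {y : {x : E // x ≠ e} | y.1 ∈ B}}
        (minorSig e σ (SCContr A e)) ∧
    TriangCo (SCstarDel A e)
        {B' | ∃ B : Set E, IsBasisSet A B ∧ e ∉ B ∧
          B' = {y : {x : E // x ≠ e} | y.1 ∈ B}}
        (minorSig e σs (SCstarDel A e)) ∧
    TriangCo (SCstarContr A e)
        {B' | ∃ B : Set E, IsBasisSet A B ∧ e ∈ B ∧
          B' = {y : {x : E // x ≠ e} | y.1 ∈ B}}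
        (minorSig e σs (SCstarContr A e)) := by
  refine ⟨?_, ?_, ?_, ?_⟩
  · -- circuit signature, deletion
    intro B₁' hB₁' B₂' hB₂' hne D hD
    obtain ⟨B₁, hB₁, he₁, rfl⟩ := hB₁'
    obtain ⟨B₂, hB₂, he₂, rfl⟩ := hB₂'
    have hBne : B₁ ≠ B₂ := fun h => hne (by rw [h])
    obtain ⟨C, hCcirc, hCe, hres⟩ := hD
    have hσ' : ∀ D' ∈ minorSig e σ (SCDel A e),
        ∃ C' ∈ σ, restr e C' = D' ∧ (C' e = 0) := by
      intro D' hD'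
      obtain ⟨⟨C', hC'σ, hres'⟩, hD'SC⟩ := hD'
      obtain ⟨C'', hC''circ, hC''e, hres''⟩ := hD'SC
      refine ⟨C', hC'σ, hres', ?_⟩
      exact ce_zero e (fun v => A.mulVec v = 0) C' C'' hC''circ.1 hC''circ.2.1 hC''e
        (hres''.trans hres'.symm) (hσ.1 hC'σ).2.2.2
    exact key_notCompat e {C | SignedCircuit A C} σ (minorSig e σ (SCDel A e)) B₁ B₂
      (fun D' hD' => (hσ' D' hD').imp fun C' ⟨h1, h2, h3⟩ => ⟨h1, h2, Or.inr h3⟩)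
      (fun D' hD' => (hσ' D' hD').imp fun C' ⟨h1, h2, h3⟩ => ⟨h1, h2, Or.inr h3⟩)
      D C hCcirc hres (Or.inl hCe) (htri B₁ hB₁ B₂ hB₂ hBne)
  · -- circuit signature, contraction
    intro B₁' hB₁' B₂' hB₂' hne D hD
    obtain ⟨B₁, hB₁, he₁, rfl⟩ := hB₁'
    obtain ⟨B₂, hB₂, he₂, rfl⟩ := hB₂'
    have hBne : B₁ ≠ B₂ := fun h => hne (by rw [h])
    obtain ⟨⟨C, hCcirc, hres⟩, hDne, hmin⟩ := hD
    have hCe : C e = 0 ∨ (e ∈ B₁ ∧ e ∈ B₂ ∧ (C e = -1 ∨ C e = 1)) := by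
      rcases hCcirc.2.2.1 e with h | h | h
      · exact Or.inr ⟨he₁, he₂, Or.inl h⟩
      · exact Or.inl h
      · exact Or.inr ⟨he₁, he₂, Or.inr h⟩
    exact key_notCompat e {C | SignedCircuit A C} σ (minorSig e σ (SCContr A e)) B₁ B₂
      (fun D' hD' => ⟨hD'.1.choose, hD'.1.choose_spec.1, hD'.1.choose_spec.2, Or.inl he₁⟩)
      (fun D' hD' => ⟨hD'.1.choose, hD'.1.choose_spec.1, hD'.1.choose_spec.2, Or.inl he₂⟩)
      D C hCcirc hres hCe (htri B₁ hB₁ B₂ hB₂ hBne)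
  · -- cocircuit signature, deletion
    intro B₁' hB₁' B₂' hB₂' hne D hD
    obtain ⟨B₁, hB₁, he₁, rfl⟩ := hB₁'
    obtain ⟨B₂, hB₂, he₂, rfl⟩ := hB₂'
    have hBne : B₁ ≠ B₂ := fun h => hne (by rw [h])
    obtain ⟨⟨C, hCcirc, hres⟩, hDne, hmin⟩ := hD
    have hCe : C e = 0 ∨ (e ∈ B₁ᶜ ∧ e ∈ B₂ᶜ ∧ (C e = -1 ∨ C e = 1)) := by
      rcases hCcirc.2.2.1 e with h | h | h
      · exact Or.inr ⟨he₁, he₂, Or.inl h⟩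
      · exact Or.inl h
      · exact Or.inr ⟨he₁, he₂, Or.inr h⟩
    rw [compl_subtype e B₁, compl_subtype e B₂]
    exact key_notCompat e {C | SignedCocircuit A C} σs (minorSig e σs (SCstarDel A e)) B₁ᶜ B₂ᶜ
      (fun D' hD' => ⟨hD'.1.choose, hD'.1.choose_spec.1, hD'.1.choose_spec.2, Or.inl he₁⟩)
      (fun D' hD' => ⟨hD'.1.choose, hD'.1.choose_spec.1, hD'.1.choose_spec.2, Or.inl he₂⟩)
      D C hCcirc hres hCe (htris B₁ hB₁ B₂ hB₂ hBne)
  · -- cocircuit signature, contraction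
    intro B₁' hB₁' B₂' hB₂' hne D hD
    obtain ⟨B₁, hB₁, he₁, rfl⟩ := hB₁'
    obtain ⟨B₂, hB₂, he₂, rfl⟩ := hB₂'
    have hBne : B₁ ≠ B₂ := fun h => hne (by rw [h])
    obtain ⟨C, hCcirc, hCe, hres⟩ := hD
    have hσ' : ∀ D' ∈ minorSig e σs (SCstarContr A e),
        ∃ C' ∈ σs, restr e C' = D' ∧ (C' e = 0) := by
      intro D' hD'
      obtain ⟨⟨C', hC'σ, hres'⟩, hD'SC⟩ := hD'
      obtain ⟨C'', hC''circ, hC''e, hres''⟩ := hD'SC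
      refine ⟨C', hC'σ, hres', ?_⟩
      exact ce_zero e (fun v => ∃ y, Matrix.vecMul y A = v) C' C'' hC''circ.1 hC''circ.2.1
        hC''e (hres''.trans hres'.symm) (hσs.1 hC'σ).2.2.2
    rw [compl_subtype e B₁, compl_subtype e B₂]
    exact key_notCompat e {C | SignedCocircuit A C} σs (minorSig e σs (SCstarContr A e)) B₁ᶜ B₂ᶜ
      (fun D' hD' => (hσ' D' hD').imp fun C' ⟨h1, h2, h3⟩ => ⟨h1, h2, Or.inr h3⟩)
      (fun D' hD' => (hσ' D' hD').imp fun C' ⟨h1, h2, h3⟩ => ⟨h1, h2, Or.inr h3⟩)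
      D C hCcirc hres (Or.inl hCe) (htris B₁ hB₁ B₂ hB₂ hBne)
end
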